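/- arXiv:1210.6363 — 9 statements merged into one kernel-verified Lean document; each statement's English description precedes it below -/
import Mathlib

section
/- Let B be a bicategory, let X : a → b and Y : b → a be 1-morphisms, and suppose given an adjunction X ⊣ Y with counit ε̃ : X ⊗ Y → I_b and unit η̃ : I_a → Y ⊗ X, and an adjunction Y ⊣ X with counit ε : Y ⊗ X → I_a and unit η : I_b → X ⊗ Y. Set A := Y ⊗ X, μ := 1_Y ⊗ ε̃ ⊗ 1_X : A ⊗ A → A, and Δ := 1_Y ⊗ η ⊗ 1_X : A → A ⊗ A. Then (A, μ, η̃) is an algebra, (A, Δ, ε) is a coalgebra, and the Frobenius identities hold: (1_A ⊗ μ) ∘ (Δ ⊗ 1_A) = Δ ∘ μ = (μ ⊗ 1_A) ∘ (1_A ⊗ Δ). Hence A is a Frobenius algebra on a. -/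
/-!
A biadjunction Y ⊣ X ⊣ Y in a bicategory gives a Frobenius algebra structure on
A := Y ⊗ X.

Conventions: the paper's horizontal composite `F ⊗ G` (first `G`, then `F`) is
Mathlib's `G ≫ F`.  Thus the paper's `Y ⊗ X : a → a` is `X ≫ Y`; the adjunction
`X ⊣ Y` has counit `ε̃ : X ⊗ Y → I_b`, i.e. `counit₁ : Y ≫ X ⟶ 𝟙 b`, and unit
`η̃ : I_a → Y ⊗ X`, i.e. `unit₁ : 𝟙 a ⟶ X ≫ Y`; the adjunction `Y ⊣ X` has
counit `ε : Y ⊗ X → I_a`, i.e. `counit₂ : X ≫ Y ⟶ 𝟙 a`, and unit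
`η : I_b → X ⊗ Y`, i.e. `unit₂ : 𝟙 b ⟶ Y ≫ X`.  All coherence isomorphisms
suppressed in the paper are inserted explicitly.
-/

open CategoryTheory Bicategory

universe w v u

variable {C : Type u} [Bicategory.{w, v} C]

/-- The multiplication `μ := 1_Y ⊗ ε̃ ⊗ 1_X : (Y ⊗ X) ⊗ (Y ⊗ X) → Y ⊗ X`. -/
def adjMul {a b : C} (X : a ⟶ b) (Y : b ⟶ a) (counit : Y ≫ X ⟶ 𝟙 b) :
    (X ≫ Y) ≫ X ≫ Y ⟶ X ≫ Y :=
  (α_ X Y (X ≫ Y)).hom ≫ X ◁ ((α_ Y X Y).inv ≫ counit ▷ Y ≫ (λ_ Y).hom)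

/-- The comultiplication `Δ := 1_Y ⊗ η ⊗ 1_X : Y ⊗ X → (Y ⊗ X) ⊗ (Y ⊗ X)`. -/
def adjComul {a b : C} (X : a ⟶ b) (Y : b ⟶ a) (unit : 𝟙 b ⟶ Y ≫ X) :
    X ≫ Y ⟶ (X ≫ Y) ≫ X ≫ Y :=
  X ◁ ((λ_ Y).inv ≫ unit ▷ Y ≫ (α_ Y X Y).hom) ≫ (α_ X Y (X ≫ Y)).inv

/-- Given adjunctions `X ⊣ Y` (with `ε̃, η̃`) and `Y ⊣ X` (with
`ε, η`), the 1-morphism `A := Y ⊗ X` with `μ := 1_Y ⊗ ε̃ ⊗ 1_X`, unit `η̃`,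
`Δ := 1_Y ⊗ η ⊗ 1_X` and counit `ε` is an algebra, a coalgebra, and satisfies
the Frobenius identities; hence it is a Frobenius algebra on `a`. -/
theorem frobenius_from_biadjunction {a b : C} (X : a ⟶ b) (Y : b ⟶ a)
    (counit₁ : Y ≫ X ⟶ 𝟙 b) (unit₁ : 𝟙 a ⟶ X ≫ Y)
    (counit₂ : X ≫ Y ⟶ 𝟙 a) (unit₂ : 𝟙 b ⟶ Y ≫ X)
    (zorro₁ : (λ_ X).inv ≫ unit₁ ▷ X ≫ (α_ X Y X).hom ≫ X ◁ counit₁ ≫ (ρ_ X).hom = 𝟙 X)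
    (zorro₂ : (ρ_ Y).inv ≫ Y ◁ unit₁ ≫ (α_ Y X Y).inv ≫ counit₁ ▷ Y ≫ (λ_ Y).hom = 𝟙 Y)
    (zorro₃ : (λ_ Y).inv ≫ unit₂ ▷ Y ≫ (α_ Y X Y).hom ≫ Y ◁ counit₂ ≫ (ρ_ Y).hom = 𝟙 Y)
    (zorro₄ : (ρ_ X).inv ≫ X ◁ unit₂ ≫ (α_ X Y X).inv ≫ counit₂ ▷ X ≫ (λ_ X).hom = 𝟙 X) :
    -- (A, μ, η̃) is an algebra
    ((α_ (X ≫ Y) (X ≫ Y) (X ≫ Y)).hom ≫ (X ≫ Y) ◁ adjMul X Y counit₁ ≫ adjMul X Y counit₁ =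
        adjMul X Y counit₁ ▷ (X ≫ Y) ≫ adjMul X Y counit₁) ∧
    ((ρ_ (X ≫ Y)).inv ≫ (X ≫ Y) ◁ unit₁ ≫ adjMul X Y counit₁ = 𝟙 (X ≫ Y)) ∧
    ((λ_ (X ≫ Y)).inv ≫ unit₁ ▷ (X ≫ Y) ≫ adjMul X Y counit₁ = 𝟙 (X ≫ Y)) ∧
    -- (A, Δ, ε) is a coalgebra
    (adjComul X Y unit₂ ≫ (X ≫ Y) ◁ adjComul X Y unit₂ =
        adjComul X Y unit₂ ≫ adjComul X Y unit₂ ▷ (X ≫ Y) ≫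
          (α_ (X ≫ Y) (X ≫ Y) (X ≫ Y)).hom) ∧
    (adjComul X Y unit₂ ≫ (X ≫ Y) ◁ counit₂ ≫ (ρ_ (X ≫ Y)).hom = 𝟙 (X ≫ Y)) ∧
    (adjComul X Y unit₂ ≫ counit₂ ▷ (X ≫ Y) ≫ (λ_ (X ≫ Y)).hom = 𝟙 (X ≫ Y)) ∧
    -- the Frobenius identities
    ((X ≫ Y) ◁ adjComul X Y unit₂ ≫ (α_ (X ≫ Y) (X ≫ Y) (X ≫ Y)).inv ≫
        adjMul X Y counit₁ ▷ (X ≫ Y) = adjMul X Y counit₁ ≫ adjComul X Y unit₂) ∧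
    (adjComul X Y unit₂ ▷ (X ≫ Y) ≫ (α_ (X ≫ Y) (X ≫ Y) (X ≫ Y)).hom ≫
        (X ≫ Y) ◁ adjMul X Y counit₁ = adjMul X Y counit₁ ≫ adjComul X Y unit₂) := by
  refine ⟨?_, ?_, ?_, ?_, ?_, ?_, ?_, ?_⟩
  · calc (α_ (X ≫ Y) (X ≫ Y) (X ≫ Y)).hom ≫ (X ≫ Y) ◁ adjMul X Y counit₁ ≫ adjMul X Y counit₁
        = 𝟙 _ ⊗≫ X ◁ ((Y ≫ X) ◁ counit₁ ≫ counit₁ ▷ 𝟙 b) ▷ Y ⊗≫ 𝟙 _ := by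
          dsimp only [adjMul]; bicategory
      _ = 𝟙 _ ⊗≫ X ◁ (counit₁ ▷ (Y ≫ X) ≫ 𝟙 b ◁ counit₁) ▷ Y ⊗≫ 𝟙 _ := by
          rw [whisker_exchange]
      _ = adjMul X Y counit₁ ▷ (X ≫ Y) ≫ adjMul X Y counit₁ := by
          dsimp only [adjMul]; bicategory
  · conv_rhs => rw [← Bicategory.whiskerLeft_id, ← zorro₂]
    simp only [adjMul]; bicategory
  · conv_rhs => rw [← Bicategory.id_whiskerRight, ← zorro₁]
    simp only [adjMul]; bicategory
  · calc adjComul X Y unit₂ ≫ (X ≫ Y) ◁ adjComul X Y unit₂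
        = 𝟙 _ ⊗≫ X ◁ (unit₂ ▷ 𝟙 b ≫ (Y ≫ X) ◁ unit₂) ▷ Y ⊗≫ 𝟙 _ := by
          dsimp only [adjComul]; bicategory
      _ = 𝟙 _ ⊗≫ X ◁ (𝟙 b ◁ unit₂ ≫ unit₂ ▷ (Y ≫ X)) ▷ Y ⊗≫ 𝟙 _ := by
          rw [← whisker_exchange]
      _ = adjComul X Y unit₂ ≫ adjComul X Y unit₂ ▷ (X ≫ Y) ≫
            (α_ (X ≫ Y) (X ≫ Y) (X ≫ Y)).hom := by
          dsimp only [adjComul]; bicategory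
  · conv_rhs => rw [← Bicategory.whiskerLeft_id, ← zorro₃]
    simp only [adjComul]; bicategory
  · conv_rhs => rw [← Bicategory.id_whiskerRight, ← zorro₄]
    simp only [adjComul]; bicategory
  · calc (X ≫ Y) ◁ adjComul X Y unit₂ ≫ (α_ (X ≫ Y) (X ≫ Y) (X ≫ Y)).inv ≫
          adjMul X Y counit₁ ▷ (X ≫ Y)
        = 𝟙 _ ⊗≫ X ◁ ((Y ≫ X) ◁ unit₂ ≫ counit₁ ▷ (Y ≫ X)) ▷ Y ⊗≫ 𝟙 _ := by
          dsimp only [adjMul, adjComul]; bicategory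
      _ = 𝟙 _ ⊗≫ X ◁ (counit₁ ▷ 𝟙 b ≫ 𝟙 b ◁ unit₂) ▷ Y ⊗≫ 𝟙 _ := by
          rw [whisker_exchange]
      _ = adjMul X Y counit₁ ≫ adjComul X Y unit₂ := by
          dsimp only [adjMul, adjComul]; bicategory
  · calc adjComul X Y unit₂ ▷ (X ≫ Y) ≫ (α_ (X ≫ Y) (X ≫ Y) (X ≫ Y)).hom ≫
          (X ≫ Y) ◁ adjMul X Y counit₁
        = 𝟙 _ ⊗≫ X ◁ (unit₂ ▷ (Y ≫ X) ≫ (Y ≫ X) ◁ counit₁) ▷ Y ⊗≫ 𝟙 _ := by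
          dsimp only [adjMul, adjComul]; bicategory
      _ = 𝟙 _ ⊗≫ X ◁ (𝟙 b ◁ counit₁ ≫ unit₂ ▷ 𝟙 b) ▷ Y ⊗≫ 𝟙 _ := by
          rw [← whisker_exchange]
      _ = adjMul X Y counit₁ ≫ adjComul X Y unit₂ := by
          dsimp only [adjMul, adjComul]; bicategory
end

section
/- Let B be a bicategory with 1-morphisms X : a → b and Y : b → a, an adjunction X ⊣ Y with counit ε̃ : X ⊗ Y → I_b and unit η̃ : I_a → Y ⊗ X, and an adjunction Y ⊣ X with counit ε : Y ⊗ X → I_a and unit η : I_b → X ⊗ Y. Suppose the 2-morphism ε̃ ∘ η : I_b → I_b is invertible. Define the 2-isomorphism φ := (ε̃ ∘ η)⁻¹ ⊗ 1_X : X → X (the invertible scalar acting on X via the unitor), and set ε' := ε ∘ (1_Y ⊗ φ⁻¹) : Y ⊗ X → I_a and η' := (φ ⊗ 1_Y) ∘ η : I_b → X ⊗ Y. Then: (i) (ε', η') is again an adjunction Y ⊣ X (the triangle identities hold); (ii) A := Y ⊗ X with multiplication μ := 1_Y ⊗ ε̃ ⊗ 1_X, unit η̃, comultiplication Δ' :=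 1_Y ⊗ η' ⊗ 1_X, and counit ε' is a Frobenius algebra; (iii) μ ∘ Δ' = 1_A, i.e., this Frobenius algebra is separable. The algebra structure (μ, η̃) is the same as for the untwisted adjunctions. -/
/-!
Twisting a biadjunction by the inverse of ε̃ ∘ η produces a separable Frobenius
algebra structure on A := Y ⊗ X.

Conventions: the paper's horizontal composite `F ⊗ G` (first `G`, then `F`) is
Mathlib's `G ≫ F`.  Thus the paper's `Y ⊗ X : a → a` is `X ≫ Y`; the adjunction
`X ⊣ Y` has counit `ε̃`, i.e. `counit₁ : Y ≫ X ⟶ 𝟙 b`, and unit `η̃`, i.e.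
`unit₁ : 𝟙 a ⟶ X ≫ Y`; the adjunction `Y ⊣ X` has counit `ε`, i.e.
`counit₂ : X ≫ Y ⟶ 𝟙 a`, and unit `η`, i.e. `unit₂ : 𝟙 b ⟶ Y ≫ X`.  The
paper's `ε̃ ∘ η : I_b → I_b` is `unit₂ ≫ counit₁`; its inverse is the datum
`θinv`.  All coherence isomorphisms suppressed in the paper are inserted
explicitly.
-/

open CategoryTheory Bicategory

universe w v u

variable {C : Type u} [Bicategory.{w, v} C]

/-- The 2-isomorphism `φ = λ_X ∘ (θ ⊗ 1_X) ∘ λ_X⁻¹ : X → X` given by an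
endomorphism `θ` of the identity 1-morphism `I_b` acting on `X` via the unitor. -/
def scalarAct {a b : C} (X : a ⟶ b) (θ : 𝟙 b ⟶ 𝟙 b) : X ⟶ X :=
  (ρ_ X).inv ≫ X ◁ θ ≫ (ρ_ X).hom

section Aux
variable {a b : C}

lemma scalarAct_comp (X : a ⟶ b) (θ₁ θ₂ : 𝟙 b ⟶ 𝟙 b) :
    scalarAct X (θ₁ ≫ θ₂) = scalarAct X θ₁ ≫ scalarAct X θ₂ := by
  simp [scalarAct]

lemma scalarAct_id (X : a ⟶ b) : scalarAct X (𝟙 (𝟙 b)) = 𝟙 X := by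
  simp [scalarAct]

lemma adjMul_assoc (X : a ⟶ b) (Y : b ⟶ a) (c : Y ≫ X ⟶ 𝟙 b) :
    (α_ (X ≫ Y) (X ≫ Y) (X ≫ Y)).hom ≫ (X ≫ Y) ◁ adjMul X Y c ≫ adjMul X Y c =
      adjMul X Y c ▷ (X ≫ Y) ≫ adjMul X Y c := by
  unfold adjMul
  calc
    _ = 𝟙 _ ⊗≫ X ◁ ((Y ≫ X) ◁ (c ▷ Y) ≫ c ▷ (𝟙 b ≫ Y)) ⊗≫ 𝟙 _ := by bicategory
    _ = 𝟙 _ ⊗≫ X ◁ (c ▷ ((Y ≫ X) ≫ Y) ≫ 𝟙 b ◁ (c ▷ Y)) ⊗≫ 𝟙 _ := by rw [whisker_exchange]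
    _ = _ := by bicategory

lemma adjComul_coassoc (X : a ⟶ b) (Y : b ⟶ a) (u : 𝟙 b ⟶ Y ≫ X) :
    adjComul X Y u ≫ (X ≫ Y) ◁ adjComul X Y u =
      adjComul X Y u ≫ adjComul X Y u ▷ (X ≫ Y) ≫ (α_ (X ≫ Y) (X ≫ Y) (X ≫ Y)).hom := by
  unfold adjComul
  calc
    _ = 𝟙 _ ⊗≫ X ◁ (u ▷ (𝟙 b ≫ Y) ≫ (Y ≫ X) ◁ (u ▷ Y)) ⊗≫ 𝟙 _ := by bicategory
    _ = 𝟙 _ ⊗≫ X ◁ (𝟙 b ◁ (u ▷ Y) ≫ u ▷ ((Y ≫ X) ≫ Y)) ⊗≫ 𝟙 _ := by rw [whisker_exchange]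
    _ = _ := by bicategory

lemma adjFrob₁ (X : a ⟶ b) (Y : b ⟶ a) (c : Y ≫ X ⟶ 𝟙 b) (u : 𝟙 b ⟶ Y ≫ X) :
    (X ≫ Y) ◁ adjComul X Y u ≫ (α_ (X ≫ Y) (X ≫ Y) (X ≫ Y)).inv ≫
        adjMul X Y c ▷ (X ≫ Y) =
      adjMul X Y c ≫ adjComul X Y u := by
  unfold adjMul adjComul
  calc
    _ = 𝟙 _ ⊗≫ X ◁ ((Y ≫ X) ◁ (u ▷ Y) ≫ c ▷ ((Y ≫ X) ≫ Y)) ⊗≫ 𝟙 _ := by bicategory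
    _ = 𝟙 _ ⊗≫ X ◁ (c ▷ (𝟙 b ≫ Y) ≫ 𝟙 b ◁ (u ▷ Y)) ⊗≫ 𝟙 _ := by rw [whisker_exchange]
    _ = _ := by bicategory

lemma adjFrob₂ (X : a ⟶ b) (Y : b ⟶ a) (c : Y ≫ X ⟶ 𝟙 b) (u : 𝟙 b ⟶ Y ≫ X) :
    adjComul X Y u ▷ (X ≫ Y) ≫ (α_ (X ≫ Y) (X ≫ Y) (X ≫ Y)).hom ≫
        (X ≫ Y) ◁ adjMul X Y c =
      adjMul X Y c ≫ adjComul X Y u := by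
  unfold adjMul adjComul
  calc
    _ = 𝟙 _ ⊗≫ X ◁ (u ▷ ((Y ≫ X) ≫ Y) ≫ (Y ≫ X) ◁ (c ▷ Y)) ⊗≫ 𝟙 _ := by bicategory
    _ = 𝟙 _ ⊗≫ X ◁ (𝟙 b ◁ (c ▷ Y) ≫ u ▷ (𝟙 b ≫ Y)) ⊗≫ 𝟙 _ := by rw [← whisker_exchange]
    _ = _ := by bicategory

lemma adjSep (X : a ⟶ b) (Y : b ⟶ a) (c : Y ≫ X ⟶ 𝟙 b) (u : 𝟙 b ⟶ Y ≫ X)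
    (h : u ≫ c = 𝟙 (𝟙 b)) :
    adjComul X Y u ≫ adjMul X Y c = 𝟙 (X ≫ Y) := by
  unfold adjMul adjComul
  calc
    _ = 𝟙 _ ⊗≫ X ◁ ((u ≫ c) ▷ Y) ⊗≫ 𝟙 _ := by bicategory
    _ = 𝟙 (X ≫ Y) := by rw [h]; bicategory

end Aux

/-- Suppose `ε̃ ∘ η : I_b → I_b` is invertible (with inverse
`θinv`), and set `φ := (ε̃ ∘ η)⁻¹ ⊗ 1_X`, `ε' := ε ∘ (1_Y ⊗ φ⁻¹)`,
`η' := (φ ⊗ 1_Y) ∘ η`.  Then (i) `(ε', η')` is again an adjunction `Y ⊣ X`;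
(ii) `A := Y ⊗ X` with `μ := 1_Y ⊗ ε̃ ⊗ 1_X`, unit `η̃`, `Δ' := 1_Y ⊗ η' ⊗ 1_X`
and counit `ε'` is a Frobenius algebra; (iii) `μ ∘ Δ' = 1_A`, i.e. it is
separable.  (The algebra structure `(μ, η̃)` is unchanged by the twist.) -/
theorem twisted_biadjunction_separable_frobenius {a b : C} (X : a ⟶ b) (Y : b ⟶ a)
    (counit₁ : Y ≫ X ⟶ 𝟙 b) (unit₁ : 𝟙 a ⟶ X ≫ Y)
    (counit₂ : X ≫ Y ⟶ 𝟙 a) (unit₂ : 𝟙 b ⟶ Y ≫ X)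
    (zorro₁ : (λ_ X).inv ≫ unit₁ ▷ X ≫ (α_ X Y X).hom ≫ X ◁ counit₁ ≫ (ρ_ X).hom = 𝟙 X)
    (zorro₂ : (ρ_ Y).inv ≫ Y ◁ unit₁ ≫ (α_ Y X Y).inv ≫ counit₁ ▷ Y ≫ (λ_ Y).hom = 𝟙 Y)
    (zorro₃ : (λ_ Y).inv ≫ unit₂ ▷ Y ≫ (α_ Y X Y).hom ≫ Y ◁ counit₂ ≫ (ρ_ Y).hom = 𝟙 Y)
    (zorro₄ : (ρ_ X).inv ≫ X ◁ unit₂ ≫ (α_ X Y X).inv ≫ counit₂ ▷ X ≫ (λ_ X).hom = 𝟙 X)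
    (θinv : 𝟙 b ⟶ 𝟙 b)
    (hθ₁ : (unit₂ ≫ counit₁) ≫ θinv = 𝟙 (𝟙 b))
    (hθ₂ : θinv ≫ (unit₂ ≫ counit₁) = 𝟙 (𝟙 b)) :
    -- (i) the twisted data form an adjunction Y ⊣ X
    ((λ_ Y).inv ≫ (unit₂ ≫ Y ◁ scalarAct X θinv) ▷ Y ≫ (α_ Y X Y).hom ≫
        Y ◁ (scalarAct X (unit₂ ≫ counit₁) ▷ Y ≫ counit₂) ≫ (ρ_ Y).hom = 𝟙 Y) ∧
    ((ρ_ X).inv ≫ X ◁ (unit₂ ≫ Y ◁ scalarAct X θinv) ≫ (α_ X Y X).inv ≫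
        (scalarAct X (unit₂ ≫ counit₁) ▷ Y ≫ counit₂) ▷ X ≫ (λ_ X).hom = 𝟙 X) ∧
    -- (ii) (A, μ, η̃) is an algebra …
    ((α_ (X ≫ Y) (X ≫ Y) (X ≫ Y)).hom ≫ (X ≫ Y) ◁ adjMul X Y counit₁ ≫ adjMul X Y counit₁ =
        adjMul X Y counit₁ ▷ (X ≫ Y) ≫ adjMul X Y counit₁) ∧
    ((ρ_ (X ≫ Y)).inv ≫ (X ≫ Y) ◁ unit₁ ≫ adjMul X Y counit₁ = 𝟙 (X ≫ Y)) ∧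
    ((λ_ (X ≫ Y)).inv ≫ unit₁ ▷ (X ≫ Y) ≫ adjMul X Y counit₁ = 𝟙 (X ≫ Y)) ∧
    -- … (A, Δ', ε') is a coalgebra …
    (adjComul X Y (unit₂ ≫ Y ◁ scalarAct X θinv) ≫
        (X ≫ Y) ◁ adjComul X Y (unit₂ ≫ Y ◁ scalarAct X θinv) =
      adjComul X Y (unit₂ ≫ Y ◁ scalarAct X θinv) ≫
        adjComul X Y (unit₂ ≫ Y ◁ scalarAct X θinv) ▷ (X ≫ Y) ≫
          (α_ (X ≫ Y) (X ≫ Y) (X ≫ Y)).hom) ∧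
    (adjComul X Y (unit₂ ≫ Y ◁ scalarAct X θinv) ≫
        (X ≫ Y) ◁ (scalarAct X (unit₂ ≫ counit₁) ▷ Y ≫ counit₂) ≫ (ρ_ (X ≫ Y)).hom =
      𝟙 (X ≫ Y)) ∧
    (adjComul X Y (unit₂ ≫ Y ◁ scalarAct X θinv) ≫
        (scalarAct X (unit₂ ≫ counit₁) ▷ Y ≫ counit₂) ▷ (X ≫ Y) ≫ (λ_ (X ≫ Y)).hom =
      𝟙 (X ≫ Y)) ∧
    -- … satisfying the Frobenius identities …
    ((X ≫ Y) ◁ adjComul X Y (unit₂ ≫ Y ◁ scalarAct X θinv) ≫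
        (α_ (X ≫ Y) (X ≫ Y) (X ≫ Y)).inv ≫ adjMul X Y counit₁ ▷ (X ≫ Y) =
      adjMul X Y counit₁ ≫ adjComul X Y (unit₂ ≫ Y ◁ scalarAct X θinv)) ∧
    (adjComul X Y (unit₂ ≫ Y ◁ scalarAct X θinv) ▷ (X ≫ Y) ≫
        (α_ (X ≫ Y) (X ≫ Y) (X ≫ Y)).hom ≫ (X ≫ Y) ◁ adjMul X Y counit₁ =
      adjMul X Y counit₁ ≫ adjComul X Y (unit₂ ≫ Y ◁ scalarAct X θinv)) ∧
    -- (iii) and it is separable.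
    (adjComul X Y (unit₂ ≫ Y ◁ scalarAct X θinv) ≫ adjMul X Y counit₁ = 𝟙 (X ≫ Y)) := by
  set θ : 𝟙 b ⟶ 𝟙 b := unit₂ ≫ counit₁ with hθdef
  have hψφ : scalarAct X θinv ≫ scalarAct X θ = 𝟙 X := by
    rw [← scalarAct_comp, hθ₂, scalarAct_id]
  have hφψ : scalarAct X θ ≫ scalarAct X θinv = 𝟙 X := by
    rw [← scalarAct_comp, hθ₁, scalarAct_id]
  have tz₃ : (λ_ Y).inv ≫ (unit₂ ≫ Y ◁ scalarAct X θinv) ▷ Y ≫ (α_ Y X Y).hom ≫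
      Y ◁ (scalarAct X θ ▷ Y ≫ counit₂) ≫ (ρ_ Y).hom = 𝟙 Y := by
    calc
      _ = (λ_ Y).inv ≫ unit₂ ▷ Y ≫ (α_ Y X Y).hom ≫
            Y ◁ ((scalarAct X θinv ≫ scalarAct X θ) ▷ Y) ≫ Y ◁ counit₂ ≫ (ρ_ Y).hom := by
        bicategory
      _ = (λ_ Y).inv ≫ unit₂ ▷ Y ≫ (α_ Y X Y).hom ≫ Y ◁ counit₂ ≫ (ρ_ Y).hom := by
        rw [hψφ]; bicategory
      _ = 𝟙 Y := zorro₃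
  have tz₄ : (ρ_ X).inv ≫ X ◁ (unit₂ ≫ Y ◁ scalarAct X θinv) ≫ (α_ X Y X).inv ≫
      (scalarAct X θ ▷ Y ≫ counit₂) ▷ X ≫ (λ_ X).hom = 𝟙 X := by
    calc
      _ = (ρ_ X).inv ≫ X ◁ unit₂ ≫ (α_ X Y X).inv ≫
            ((X ≫ Y) ◁ scalarAct X θinv ≫ (scalarAct X θ ▷ Y) ▷ X) ≫
            counit₂ ▷ X ≫ (λ_ X).hom := by
        bicategory
      _ = (ρ_ X).inv ≫ X ◁ unit₂ ≫ (α_ X Y X).inv ≫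
            ((scalarAct X θ ▷ Y) ▷ X ≫ (X ≫ Y) ◁ scalarAct X θinv) ≫
            counit₂ ▷ X ≫ (λ_ X).hom := by
        rw [whisker_exchange]
      _ = (ρ_ X).inv ≫ (X ◁ unit₂ ≫ scalarAct X θ ▷ (Y ≫ X)) ≫ (α_ X Y X).inv ≫
            ((X ≫ Y) ◁ scalarAct X θinv ≫ counit₂ ▷ X) ≫ (λ_ X).hom := by
        bicategory
      _ = (ρ_ X).inv ≫ (scalarAct X θ ▷ 𝟙 b ≫ X ◁ unit₂) ≫ (α_ X Y X).inv ≫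
            (counit₂ ▷ X ≫ 𝟙 a ◁ scalarAct X θinv) ≫ (λ_ X).hom := by
        rw [whisker_exchange, whisker_exchange]
      _ = scalarAct X θ ≫
            ((ρ_ X).inv ≫ X ◁ unit₂ ≫ (α_ X Y X).inv ≫ counit₂ ▷ X ≫ (λ_ X).hom) ≫
            scalarAct X θinv := by
        bicategory
      _ = 𝟙 X := by rw [zorro₄, Category.id_comp, hφψ]
  have hsep : (unit₂ ≫ Y ◁ scalarAct X θinv) ≫ counit₁ = 𝟙 (𝟙 b) := by
    have h1 : Y ◁ scalarAct X θinv ≫ counit₁ = counit₁ ≫ θinv := by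
      unfold scalarAct
      calc
        _ = 𝟙 _ ⊗≫ ((Y ≫ X) ◁ θinv ≫ counit₁ ▷ 𝟙 b) ⊗≫ 𝟙 _ := by bicategory
        _ = 𝟙 _ ⊗≫ (counit₁ ▷ 𝟙 b ≫ 𝟙 b ◁ θinv) ⊗≫ 𝟙 _ := by rw [whisker_exchange]
        _ = counit₁ ≫ θinv := by bicategory
    rw [Category.assoc, h1, ← Category.assoc, hθ₁]
  refine ⟨tz₃, tz₄, adjMul_assoc X Y counit₁, ?_, ?_, adjComul_coassoc X Y _, ?_, ?_,
    adjFrob₁ X Y counit₁ _, adjFrob₂ X Y counit₁ _, adjSep X Y counit₁ _ hsep⟩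
  · unfold adjMul
    calc
      _ = 𝟙 _ ⊗≫ X ◁ ((ρ_ Y).inv ≫ Y ◁ unit₁ ≫ (α_ Y X Y).inv ≫ counit₁ ▷ Y ≫ (λ_ Y).hom)
            ⊗≫ 𝟙 _ := by bicategory
      _ = 𝟙 (X ≫ Y) := by rw [zorro₂]; bicategory
  · unfold adjMul
    calc
      _ = 𝟙 _ ⊗≫ ((λ_ X).inv ≫ unit₁ ▷ X ≫ (α_ X Y X).hom ≫ X ◁ counit₁ ≫ (ρ_ X).hom) ▷ Y
            ⊗≫ 𝟙 _ := by bicategory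
      _ = 𝟙 (X ≫ Y) := by rw [zorro₁]; bicategory
  · unfold adjComul
    calc
      _ = 𝟙 _ ⊗≫ X ◁ ((λ_ Y).inv ≫ (unit₂ ≫ Y ◁ scalarAct X θinv) ▷ Y ≫ (α_ Y X Y).hom ≫
            Y ◁ (scalarAct X θ ▷ Y ≫ counit₂) ≫ (ρ_ Y).hom) ⊗≫ 𝟙 _ := by bicategory
      _ = 𝟙 (X ≫ Y) := by rw [tz₃]; bicategory
  · unfold adjComul
    calc
      _ = 𝟙 _ ⊗≫ ((ρ_ X).inv ≫ X ◁ (unit₂ ≫ Y ◁ scalarAct X θinv) ≫ (α_ X Y X).inv ≫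
            (scalarAct X θ ▷ Y ≫ counit₂) ▷ X ≫ (λ_ X).hom) ▷ Y ⊗≫ 𝟙 _ := by bicategory
      _ = 𝟙 (X ≫ Y) := by rw [tz₄]; bicategory
end

section
/- Let B be a bicategory with 1-morphisms X : a → b and Y : b → a, an adjunction X ⊣ Y with counit ε̃ : X ⊗ Y → I_b and unit η̃ : I_a → Y ⊗ X, and an adjunction Y ⊣ X with counit ε : Y ⊗ X → I_a and unit η : I_b → X ⊗ Y, such that ε̃ ∘ η : I_b → I_b is invertible. Consider the parallel pair of 2-morphisms l, r : X ⊗ Y ⊗ X ⊗ Y → X ⊗ Y in the hom-category B(b,b), where r := ε̃ ⊗ 1_{X ⊗ Y} applies ε̃ to the leftmost X ⊗ Y pair and l := 1_{X ⊗ Y} ⊗ ε̃ applies ε̃ to the rightmost X ⊗ Y pair. Then ε̃ : X ⊗ Y → I_b is a coequalizer of (l, r): ε̃ ∘ l = ε̃ ∘ r, and for every 1-morphism Z : b → b and every 2-morphism φ : X ⊗ Y → Z with φ ∘ l = φ ∘ r there exists a unique 2-morphism ζ : I_b → Z with ζ ∘ ε̃ = φ. (Equivalently, X ⊗_A Y ≅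 I_b, where A := Y ⊗ X and l, r are induced by the right A-action on X and the left A-action on Y coming from ε̃.) -/
/-!
With `θ := ε̃ ∘ η`, the 2-morphism `s := η ∘ θ⁻¹` is a section of `ε̃`. Then `s ⊗ 1_{X ⊗ Y}` is a
section of `r = ε̃ ⊗ 1_{X ⊗ Y}`, and by the interchange law `l ∘ (s ⊗ 1_{X ⊗ Y}) = s ∘ ε̃`. So
`(l, r, ε̃)` is a split coequalizer, and split coequalizers are coequalizers.
-/

open CategoryTheory Bicategory Limits

universe w v u

variable {C : Type u} [Bicategory.{w, v} C]

namespace CategoryTheory.Bicategory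

variable {b : C} {E : b ⟶ b}

def isSplitCoequalizerOfSection (c : E ⟶ 𝟙 b) (s : 𝟙 b ⟶ E) (hs : s ≫ c = 𝟙 (𝟙 b)) :
    IsSplitCoequalizer (c ▷ E ≫ (λ_ E).hom) (E ◁ c ≫ (ρ_ E).hom) c where
  rightSection := s
  leftSection := (ρ_ E).inv ≫ E ◁ s
  condition := by
    rw [Category.assoc, Category.assoc, ← leftUnitor_naturality, ← rightUnitor_naturality,
      unitors_equal, whisker_exchange_assoc]
  rightSection_π := hs
  leftSection_bottom := by
    rw [Category.assoc, ← whiskerLeft_comp_assoc, hs, whiskerLeft_id, Category.id_comp,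
      Iso.inv_hom_id]
  leftSection_top := by
    rw [Category.assoc, whisker_exchange_assoc, leftUnitor_naturality, unitors_equal,
      rightUnitor_naturality_assoc, Iso.inv_hom_id_assoc]

end CategoryTheory.Bicategory

theorem counit_is_coequalizer_general {a b : C} (X : a ⟶ b) (Y : b ⟶ a)
    (counit₁ : Y ≫ X ⟶ 𝟙 b) (unit₂ : 𝟙 b ⟶ Y ≫ X) (θinv : 𝟙 b ⟶ 𝟙 b)
    (hθ₂ : θinv ≫ (unit₂ ≫ counit₁) = 𝟙 (𝟙 b)) :
    ((counit₁ ▷ (Y ≫ X) ≫ (λ_ (Y ≫ X)).hom) ≫ counit₁ =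
        ((Y ≫ X) ◁ counit₁ ≫ (ρ_ (Y ≫ X)).hom) ≫ counit₁) ∧
    (∀ (Z : b ⟶ b) (φ : Y ≫ X ⟶ Z),
      (counit₁ ▷ (Y ≫ X) ≫ (λ_ (Y ≫ X)).hom) ≫ φ =
          ((Y ≫ X) ◁ counit₁ ≫ (ρ_ (Y ≫ X)).hom) ≫ φ →
        ∃! ζ : 𝟙 b ⟶ Z, counit₁ ≫ ζ = φ) := by
  let split :=
    isSplitCoequalizerOfSection counit₁ (θinv ≫ unit₂) ((Category.assoc _ _ _).trans hθ₂)
  exact ⟨split.condition, fun Z φ hφ => Cofork.IsColimit.existsUnique split.isCoequalizer φ hφ⟩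

/-- Under the above hypotheses, `ε̃` coequalizes `(l, r)` and is
universal among 2-morphisms doing so: for every `Z : b ⟶ b` and
`φ : X ⊗ Y → Z` with `φ ∘ l = φ ∘ r` there is a unique `ζ : I_b → Z` with
`ζ ∘ ε̃ = φ`. -/
theorem counit_is_coequalizer {a b : C} (X : a ⟶ b) (Y : b ⟶ a)
    (counit₁ : Y ≫ X ⟶ 𝟙 b) (unit₁ : 𝟙 a ⟶ X ≫ Y)
    (counit₂ : X ≫ Y ⟶ 𝟙 a) (unit₂ : 𝟙 b ⟶ Y ≫ X)
    (zorro₁ : (λ_ X).inv ≫ unit₁ ▷ X ≫ (α_ X Y X).hom ≫ X ◁ counit₁ ≫ (ρ_ X).hom = 𝟙 X)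
    (zorro₂ : (ρ_ Y).inv ≫ Y ◁ unit₁ ≫ (α_ Y X Y).inv ≫ counit₁ ▷ Y ≫ (λ_ Y).hom = 𝟙 Y)
    (zorro₃ : (λ_ Y).inv ≫ unit₂ ▷ Y ≫ (α_ Y X Y).hom ≫ Y ◁ counit₂ ≫ (ρ_ Y).hom = 𝟙 Y)
    (zorro₄ : (ρ_ X).inv ≫ X ◁ unit₂ ≫ (α_ X Y X).inv ≫ counit₂ ▷ X ≫ (λ_ X).hom = 𝟙 X)
    (θinv : 𝟙 b ⟶ 𝟙 b)
    (hθ₁ : (unit₂ ≫ counit₁) ≫ θinv = 𝟙 (𝟙 b))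
    (hθ₂ : θinv ≫ (unit₂ ≫ counit₁) = 𝟙 (𝟙 b)) :
    ((counit₁ ▷ (Y ≫ X) ≫ (λ_ (Y ≫ X)).hom) ≫ counit₁ =
        ((Y ≫ X) ◁ counit₁ ≫ (ρ_ (Y ≫ X)).hom) ≫ counit₁) ∧
    (∀ (Z : b ⟶ b) (φ : Y ≫ X ⟶ Z),
      (counit₁ ▷ (Y ≫ X) ≫ (λ_ (Y ≫ X)).hom) ≫ φ =
          ((Y ≫ X) ◁ counit₁ ≫ (ρ_ (Y ≫ X)).hom) ≫ φ →
        ∃! ζ : 𝟙 b ⟶ Z, counit₁ ≫ ζ = φ) :=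
  counit_is_coequalizer_general X Y counit₁ unit₂ θinv hθ₂
end

section
/- Let B be a bicategory, A a separable Frobenius algebra on an object a, X : a → b a right A-module with action ρ_X : X ⊗ A → X, and Y : c → a a left A-module with action ρ_Y : A ⊗ Y → Y. Define π := (ρ_X ⊗ ρ_Y) ∘ (1_X ⊗ (Δ ∘ η) ⊗ 1_Y) : X ⊗ Y → X ⊗ Y, and the parallel pair r := ρ_X ⊗ 1_Y and l := 1_X ⊗ ρ_Y, both X ⊗ A ⊗ Y → X ⊗ Y. Then π is idempotent, π ∘ π = π, and π coequalizes the pair: π ∘ l = π ∘ r. -/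
/-!
The canonical idempotent π on X ⊗ Y for a right module X and a left module Y
over a separable Frobenius algebra A.

Conventions: the paper's horizontal composite `F ⊗ G` (first `G`, then `F`) is
Mathlib's `G ≫ F`.  A right `A`-module `X : a → b` has its action
`X ⊗ A → X` given by `actX : A ≫ X ⟶ X`; a left `A`-module `Y : c → a` has its
action `A ⊗ Y → Y` given by `actY : Y ≫ A ⟶ Y`; the paper's `X ⊗ Y : c → b`
is `Y ≫ X`.  All coherence isomorphisms suppressed in the paper are inserted
explicitly.
-/

open CategoryTheory Bicategory

universe w v u

/-- A Frobenius algebra on an object `a` of a bicategory. -/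
structure Frob {C : Type u} [Bicategory.{w, v} C] (a : C) where
  A : a ⟶ a
  mul : A ≫ A ⟶ A
  one : 𝟙 a ⟶ A
  comul : A ⟶ A ≫ A
  counit : A ⟶ 𝟙 a
  mul_assoc : (α_ A A A).hom ≫ A ◁ mul ≫ mul = mul ▷ A ≫ mul
  mul_one : (ρ_ A).inv ≫ A ◁ one ≫ mul = 𝟙 A
  one_mul : (λ_ A).inv ≫ one ▷ A ≫ mul = 𝟙 A
  comul_coassoc : comul ≫ A ◁ comul = comul ≫ comul ▷ A ≫ (α_ A A A).hom
  comul_counit : comul ≫ A ◁ counit ≫ (ρ_ A).hom = 𝟙 A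
  counit_comul : comul ≫ counit ▷ A ≫ (λ_ A).hom = 𝟙 A
  frob_left : A ◁ comul ≫ (α_ A A A).inv ≫ mul ▷ A = mul ≫ comul
  frob_right : comul ▷ A ≫ (α_ A A A).hom ≫ A ◁ mul = mul ≫ comul

variable {C : Type u} [Bicategory.{w, v} C]

/-- A right `A`-module structure on `X : a ⟶ b` (paper action `X ⊗ A → X`,
i.e. `A ≫ X ⟶ X`). -/
def IsRightModule {a b : C} (F : Frob a) (X : a ⟶ b) (act : F.A ≫ X ⟶ X) : Prop :=
  ((α_ F.A F.A X).hom ≫ F.A ◁ act ≫ act = F.mul ▷ X ≫ act) ∧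
  ((λ_ X).inv ≫ F.one ▷ X ≫ act = 𝟙 X)

/-- A left `A`-module structure on `Y : c ⟶ a` (paper action `A ⊗ Y → Y`,
i.e. `Y ≫ A ⟶ Y`). -/
def IsLeftModule {a c : C} (F : Frob a) (Y : c ⟶ a) (act : Y ≫ F.A ⟶ Y) : Prop :=
  ((α_ Y F.A F.A).hom ≫ Y ◁ F.mul ≫ act = act ▷ F.A ≫ act) ∧
  ((ρ_ Y).inv ≫ Y ◁ F.one ≫ act = 𝟙 Y)

/-- The idempotent `π := (ρ_X ⊗ ρ_Y) ∘ (1_X ⊗ (Δ ∘ η) ⊗ 1_Y) : X ⊗ Y → X ⊗ Y`. -/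
def piT {a b c : C} (F : Frob a) {X : a ⟶ b} {Y : c ⟶ a}
    (actX : F.A ≫ X ⟶ X) (actY : Y ≫ F.A ⟶ Y) : Y ≫ X ⟶ Y ≫ X :=
  (ρ_ Y).inv ▷ X ≫ (Y ◁ (F.one ≫ F.comul)) ▷ X ≫ (α_ Y F.A F.A).inv ▷ X ≫
    (α_ (Y ≫ F.A) F.A X).hom ≫ actY ▷ (F.A ≫ X) ≫ Y ◁ actX

/-- The pair `r := ρ_X ⊗ 1_Y` and `l := 1_X ⊗ ρ_Y : X ⊗ A ⊗ Y → X ⊗ Y`. -/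
def rPair {a b c : C} (F : Frob a) {X : a ⟶ b} {Y : c ⟶ a}
    (actX : F.A ≫ X ⟶ X) : Y ≫ F.A ≫ X ⟶ Y ≫ X :=
  Y ◁ actX

def lPair {a b c : C} (F : Frob a) {X : a ⟶ b} {Y : c ⟶ a}
    (actY : Y ≫ F.A ⟶ Y) : Y ≫ F.A ≫ X ⟶ Y ≫ X :=
  (α_ Y F.A X).inv ≫ actY ▷ X

section Aux
variable {a : C} (F : Frob a)

lemma ins_left :
    (ρ_ F.A).inv ≫ F.A ◁ (F.one ≫ F.comul) ≫ (α_ F.A F.A F.A).inv ≫ F.mul ▷ F.A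
      = F.comul := by
  rw [Bicategory.whiskerLeft_comp, Category.assoc, F.frob_left, reassoc_of% F.mul_one]

lemma ins_right :
    (λ_ F.A).inv ≫ (F.one ≫ F.comul) ▷ F.A ≫ (α_ F.A F.A F.A).hom ≫ F.A ◁ F.mul
      = F.comul := by
  rw [Bicategory.comp_whiskerRight, Category.assoc, F.frob_right, reassoc_of% F.one_mul]

lemma s_key (hsep : F.comul ≫ F.mul = 𝟙 F.A) :
    (F.one ≫ F.comul) ≫
      ((ρ_ F.A).inv ≫ F.A ◁ (F.one ≫ F.comul) ≫ (α_ F.A F.A F.A).inv ≫ F.mul ▷ F.A) ▷ F.A ≫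
      (α_ F.A F.A F.A).hom ≫ F.A ◁ F.mul = F.one ≫ F.comul := by
  rw [ins_left F, Category.assoc, F.frob_right, reassoc_of% hsep]
end Aux
section Main
variable {a b c : C} (F : Frob a)
  {X : a ⟶ b} {Y : c ⟶ a} (actX : F.A ≫ X ⟶ X) (actY : Y ≫ F.A ⟶ Y)

lemma piT_alt : piT F actX actY =
    (ρ_ Y).inv ▷ X ≫ (Y ◁ (F.one ≫ F.comul)) ▷ X ≫ (α_ Y F.A F.A).inv ▷ X ≫
      (α_ (Y ≫ F.A) F.A X).hom ≫ (Y ≫ F.A) ◁ actX ≫ actY ▷ X := by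
  unfold piT
  rw [← whisker_exchange]
end Main
section Chains
variable {a b c : C} {F : Frob a}
  {X : a ⟶ b} {Y : c ⟶ a} {actX : F.A ≫ X ⟶ X} {actY : Y ≫ F.A ⟶ Y}

lemma l_chain (hY : IsLeftModule F Y actY) :
    lPair F actY ≫ piT F actX actY =
      Y ◁ (F.comul ▷ X) ⊗≫ Y ◁ (F.A ◁ actX) ⊗≫ actY ▷ X := by
  calc lPair F actY ≫ piT F actX actY
      = (α_ Y F.A X).inv ≫
          (actY ▷ X ≫
            Y ◁ ((λ_ X).inv ≫ (F.one ≫ F.comul) ▷ X ≫ (α_ F.A F.A X).hom ≫ F.A ◁ actX)) ⊗≫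
          actY ▷ X := by
        rw [piT_alt]; unfold lPair; bicategory
    _ = (α_ Y F.A X).inv ≫
          ((Y ≫ F.A) ◁ ((λ_ X).inv ≫ (F.one ≫ F.comul) ▷ X ≫ (α_ F.A F.A X).hom ≫ F.A ◁ actX) ≫
            actY ▷ (F.A ≫ X)) ⊗≫
          actY ▷ X := by rw [whisker_exchange]
    _ = Y ◁ (F.A ◁ ((λ_ X).inv ≫ (F.one ≫ F.comul) ▷ X ≫ (α_ F.A F.A X).hom ≫ F.A ◁ actX)) ⊗≫
          (actY ▷ F.A ≫ actY) ▷ X := by bicategory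
    _ = Y ◁ (F.A ◁ ((λ_ X).inv ≫ (F.one ≫ F.comul) ▷ X ≫ (α_ F.A F.A X).hom ≫ F.A ◁ actX)) ⊗≫
          ((α_ Y F.A F.A).hom ≫ Y ◁ F.mul ≫ actY) ▷ X := by rw [← hY.1]
    _ = Y ◁ (F.A ◁ ((λ_ X).inv ≫ (F.one ≫ F.comul) ▷ X)) ⊗≫
          ((Y ≫ F.A ≫ F.A) ◁ actX ≫ (Y ◁ F.mul) ▷ X) ⊗≫ actY ▷ X := by bicategory
    _ = Y ◁ (F.A ◁ ((λ_ X).inv ≫ (F.one ≫ F.comul) ▷ X)) ⊗≫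
          ((Y ◁ F.mul) ▷ (F.A ≫ X) ≫ (Y ≫ F.A) ◁ actX) ⊗≫ actY ▷ X := by
        rw [whisker_exchange]
    _ = Y ◁ (((ρ_ F.A).inv ≫ F.A ◁ (F.one ≫ F.comul) ≫ (α_ F.A F.A F.A).inv ≫ F.mul ▷ F.A) ▷ X)
          ⊗≫ Y ◁ (F.A ◁ actX) ⊗≫ actY ▷ X := by bicategory
    _ = Y ◁ (F.comul ▷ X) ⊗≫ Y ◁ (F.A ◁ actX) ⊗≫ actY ▷ X := by rw [ins_left F]
end Chains
section Chains2
variable {a b c : C} {F : Frob a}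
  {X : a ⟶ b} {Y : c ⟶ a} {actX : F.A ≫ X ⟶ X} {actY : Y ≫ F.A ⟶ Y}

lemma r_chain (hX : IsRightModule F X actX) :
    rPair F actX ≫ piT F actX actY =
      Y ◁ (F.comul ▷ X) ⊗≫ Y ◁ (F.A ◁ actX) ⊗≫ actY ▷ X := by
  calc rPair F actX ≫ piT F actX actY
      = (Y ◁ actX ≫ ((ρ_ Y).inv ≫ Y ◁ (F.one ≫ F.comul)) ▷ X) ⊗≫
          (Y ≫ F.A) ◁ actX ≫ actY ▷ X := by
        rw [piT_alt]; unfold rPair; bicategory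
    _ = (((ρ_ Y).inv ≫ Y ◁ (F.one ≫ F.comul)) ▷ (F.A ≫ X) ≫ (Y ≫ F.A ≫ F.A) ◁ actX) ⊗≫
          (Y ≫ F.A) ◁ actX ≫ actY ▷ X := by rw [whisker_exchange]
    _ = (ρ_ Y).inv ▷ (F.A ≫ X) ⊗≫ (Y ◁ (F.one ≫ F.comul)) ▷ (F.A ≫ X) ⊗≫
          Y ◁ (F.A ◁ ((α_ F.A F.A X).hom ≫ F.A ◁ actX ≫ actX)) ⊗≫ actY ▷ X := by bicategory
    _ = (ρ_ Y).inv ▷ (F.A ≫ X) ⊗≫ (Y ◁ (F.one ≫ F.comul)) ▷ (F.A ≫ X) ⊗≫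
          Y ◁ (F.A ◁ (F.mul ▷ X ≫ actX)) ⊗≫ actY ▷ X := by rw [hX.1]
    _ = Y ◁ (((λ_ F.A).inv ≫ (F.one ≫ F.comul) ▷ F.A ≫ (α_ F.A F.A F.A).hom ≫ F.A ◁ F.mul) ▷ X)
          ⊗≫ Y ◁ (F.A ◁ actX) ⊗≫ actY ▷ X := by bicategory
    _ = Y ◁ (F.comul ▷ X) ⊗≫ Y ◁ (F.A ◁ actX) ⊗≫ actY ▷ X := by rw [ins_right F]
end Chains2
section Idem
variable {a b c : C} {F : Frob a}
  {X : a ⟶ b} {Y : c ⟶ a} {actX : F.A ≫ X ⟶ X} {actY : Y ≫ F.A ⟶ Y}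

lemma idem_chain (hsep : F.comul ≫ F.mul = 𝟙 F.A)
    (hX : IsRightModule F X actX) (hY : IsLeftModule F Y actY) :
    piT F actX actY ≫ piT F actX actY = piT F actX actY := by
  calc piT F actX actY ≫ piT F actX actY
      = (ρ_ Y).inv ▷ X ⊗≫ (Y ◁ (F.one ≫ F.comul)) ▷ X ⊗≫ (Y ≫ F.A) ◁ actX ⊗≫
          (actY ▷ X ≫
            Y ◁ ((λ_ X).inv ≫ (F.one ≫ F.comul) ▷ X ≫ (α_ F.A F.A X).hom ≫ F.A ◁ actX)) ⊗≫
          actY ▷ X := by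
        rw [piT_alt]; bicategory
    _ = (ρ_ Y).inv ▷ X ⊗≫ (Y ◁ (F.one ≫ F.comul)) ▷ X ⊗≫ (Y ≫ F.A) ◁ actX ⊗≫
          ((Y ≫ F.A) ◁ ((λ_ X).inv ≫ (F.one ≫ F.comul) ▷ X ≫ (α_ F.A F.A X).hom ≫ F.A ◁ actX) ≫
            actY ▷ (F.A ≫ X)) ⊗≫
          actY ▷ X := by rw [whisker_exchange]
    _ = (ρ_ Y).inv ▷ X ⊗≫ (Y ◁ (F.one ≫ F.comul)) ▷ X ⊗≫ (Y ≫ F.A) ◁ actX ⊗≫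
          Y ◁ (F.A ◁ ((λ_ X).inv ≫ (F.one ≫ F.comul) ▷ X ≫ (α_ F.A F.A X).hom ≫ F.A ◁ actX)) ⊗≫
          (actY ▷ F.A ≫ actY) ▷ X := by bicategory
    _ = (ρ_ Y).inv ▷ X ⊗≫ (Y ◁ (F.one ≫ F.comul)) ▷ X ⊗≫ (Y ≫ F.A) ◁ actX ⊗≫
          Y ◁ (F.A ◁ ((λ_ X).inv ≫ (F.one ≫ F.comul) ▷ X ≫ (α_ F.A F.A X).hom ≫ F.A ◁ actX)) ⊗≫
          ((α_ Y F.A F.A).hom ≫ Y ◁ F.mul ≫ actY) ▷ X := by rw [← hY.1]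
    _ = (ρ_ Y).inv ▷ X ⊗≫ (Y ◁ (F.one ≫ F.comul)) ▷ X ⊗≫
          ((Y ≫ F.A) ◁ actX ≫
            ((ρ_ (Y ≫ F.A)).inv ≫ (Y ≫ F.A) ◁ (F.one ≫ F.comul)) ▷ X) ⊗≫
          Y ◁ (F.A ◁ (F.A ◁ actX)) ⊗≫ (Y ◁ F.mul) ▷ X ⊗≫ actY ▷ X := by bicategory
    _ = (ρ_ Y).inv ▷ X ⊗≫ (Y ◁ (F.one ≫ F.comul)) ▷ X ⊗≫
          (((ρ_ (Y ≫ F.A)).inv ≫ (Y ≫ F.A) ◁ (F.one ≫ F.comul)) ▷ (F.A ≫ X) ≫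
            ((Y ≫ F.A) ≫ F.A ≫ F.A) ◁ actX) ⊗≫
          Y ◁ (F.A ◁ (F.A ◁ actX)) ⊗≫ (Y ◁ F.mul) ▷ X ⊗≫ actY ▷ X := by rw [whisker_exchange]
    _ = (ρ_ Y).inv ▷ X ⊗≫ (Y ◁ (F.one ≫ F.comul)) ▷ X ⊗≫
          Y ◁ (F.A ◁ ((λ_ (F.A ≫ X)).inv ≫ (F.one ≫ F.comul) ▷ (F.A ≫ X))) ⊗≫
          Y ◁ (F.A ◁ (F.A ◁ ((α_ F.A F.A X).hom ≫ F.A ◁ actX ≫ actX))) ⊗≫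
          (Y ◁ F.mul) ▷ X ⊗≫ actY ▷ X := by bicategory
    _ = (ρ_ Y).inv ▷ X ⊗≫ (Y ◁ (F.one ≫ F.comul)) ▷ X ⊗≫
          Y ◁ (F.A ◁ ((λ_ (F.A ≫ X)).inv ≫ (F.one ≫ F.comul) ▷ (F.A ≫ X))) ⊗≫
          Y ◁ (F.A ◁ (F.A ◁ (F.mul ▷ X ≫ actX))) ⊗≫
          (Y ◁ F.mul) ▷ X ⊗≫ actY ▷ X := by rw [hX.1]
    _ = (ρ_ Y).inv ▷ X ⊗≫ (Y ◁ (F.one ≫ F.comul)) ▷ X ⊗≫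
          Y ◁ (F.A ◁ ((λ_ (F.A ≫ X)).inv ≫ (F.one ≫ F.comul) ▷ (F.A ≫ X))) ⊗≫
          ((Y ≫ F.A ≫ F.A) ◁ (F.mul ▷ X ≫ actX) ≫ (Y ◁ F.mul) ▷ X) ⊗≫
          actY ▷ X := by bicategory
    _ = (ρ_ Y).inv ▷ X ⊗≫ (Y ◁ (F.one ≫ F.comul)) ▷ X ⊗≫
          Y ◁ (F.A ◁ ((λ_ (F.A ≫ X)).inv ≫ (F.one ≫ F.comul) ▷ (F.A ≫ X))) ⊗≫
          ((Y ◁ F.mul) ▷ ((F.A ≫ F.A) ≫ X) ≫ (Y ≫ F.A) ◁ (F.mul ▷ X ≫ actX)) ⊗≫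
          actY ▷ X := by rw [whisker_exchange]
    _ = (ρ_ Y).inv ▷ X ⊗≫
          (Y ◁ ((F.one ≫ F.comul) ≫
            ((ρ_ F.A).inv ≫ F.A ◁ (F.one ≫ F.comul) ≫ (α_ F.A F.A F.A).inv ≫ F.mul ▷ F.A) ▷ F.A ≫
            (α_ F.A F.A F.A).hom ≫ F.A ◁ F.mul)) ▷ X ⊗≫
          (Y ≫ F.A) ◁ actX ⊗≫ actY ▷ X := by bicategory
    _ = (ρ_ Y).inv ▷ X ⊗≫ (Y ◁ (F.one ≫ F.comul)) ▷ X ⊗≫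
          (Y ≫ F.A) ◁ actX ⊗≫ actY ▷ X := by rw [s_key F hsep]
    _ = piT F actX actY := by rw [piT_alt]; bicategory
end Idem
/-- For a separable Frobenius algebra `A`, a right `A`-module
`X` and a left `A`-module `Y`, the 2-morphism `π` is idempotent and coequalizes
the pair `(l, r)`: `π ∘ π = π` and `π ∘ l = π ∘ r`. -/
theorem pi_idempotent_coequalizes {a b c : C} (F : Frob a)
    (hsep : F.comul ≫ F.mul = 𝟙 F.A)
    {X : a ⟶ b} {Y : c ⟶ a} (actX : F.A ≫ X ⟶ X) (actY : Y ≫ F.A ⟶ Y)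
    (hX : IsRightModule F X actX) (hY : IsLeftModule F Y actY) :
    (piT F actX actY ≫ piT F actX actY = piT F actX actY) ∧
    (lPair F actY ≫ piT F actX actY = rPair F actX ≫ piT F actX actY) := by
  exact ⟨idem_chain hsep hX hY, (l_chain hY).trans (r_chain hX).symm⟩
end

section
/- Let B be a bicategory, A a separable Frobenius algebra on an object a, B a separable Frobenius algebra on an object b, and let X, Y : a → b be B-A-bimodules with left B-actions ρ^l_X, ρ^l_Y and right A-actions ρ^r_X, ρ^r_Y. For φ : X → Y define P_B(φ) := ρ^l_Y ∘ (1_B ⊗ φ) ∘ (1_B ⊗ ρ^l_X) ∘ ((Δ_B ∘ η_B) ⊗ 1_X) and P_A(φ) := ρ^r_Y ∘ (φ ⊗ 1_A) ∘ (ρ^r_X ⊗ 1_A) ∘ (1_X ⊗ (Δ_A ∘ η_A)). Then P_B ∘ P_A = P_A ∘ P_B; the composite π_{BA} := P_B ∘ P_A is idempotent; π_{BA}(φ) is a bimodule map for every φ : X → Y; and π_{BA}(φ) = φ whenever φ is a bimodule map. Hence π_{BA} is a projection of Hom(X,Y) onto the set Hom_{BA}(X,Y) of bimodule maps. -/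
/-!
Conventions: the paper's horizontal composite `F ⊗ G` (first `G`, then `F`) is
Mathlib's `G ≫ F`.  A `B`-`A`-bimodule `X : a → b` has its left `B`-action
`B ⊗ X → X` given by `ρˡ : X ≫ B ⟶ X` and its right `A`-action `X ⊗ A → X`
given by `ρʳ : A ≫ X ⟶ X`.  All coherence isomorphisms suppressed in the paper
are inserted explicitly.

Separability and the unit axiom of `X` make `P_B` fix left-linear maps. For any `φ`, the
Frobenius relation turns both `ρˡ_Y ∘ (1_B ⊗ P_B φ)` and `P_B φ ∘ ρˡ_X` into the same
map `B ⊗ X → Y`, so `P_B φ` is left-linear. The statements about `P_A` are those about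
`P_B` in the 1-cell opposite bicategory `Cᵒᵖ`, where `A` acts on the left. Finally `P_A`
and `P_B` commute by the interchange law and the compatibility of the two actions.
-/

open CategoryTheory Bicategory

universe w v u

variable {C : Type u} [Bicategory.{w, v} C]

def IsBimodule {a b : C} (FA : Frob a) (FB : Frob b) (X : a ⟶ b)
    (ρl : X ≫ FB.A ⟶ X) (ρr : FA.A ≫ X ⟶ X) : Prop :=
  ((α_ X FB.A FB.A).hom ≫ X ◁ FB.mul ≫ ρl = ρl ▷ FB.A ≫ ρl) ∧
  ((ρ_ X).inv ≫ X ◁ FB.one ≫ ρl = 𝟙 X) ∧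
  ((α_ FA.A FA.A X).hom ≫ FA.A ◁ ρr ≫ ρr = FA.mul ▷ X ≫ ρr) ∧
  ((λ_ X).inv ≫ FA.one ▷ X ≫ ρr = 𝟙 X) ∧
  (ρr ▷ FB.A ≫ ρl = (α_ FA.A X FB.A).hom ≫ FA.A ◁ ρl ≫ ρr)

def IsBimoduleMap {a b : C} (FA : Frob a) (FB : Frob b) {X Y : a ⟶ b}
    (ρlX : X ≫ FB.A ⟶ X) (ρrX : FA.A ≫ X ⟶ X)
    (ρlY : Y ≫ FB.A ⟶ Y) (ρrY : FA.A ≫ Y ⟶ Y) (φ : X ⟶ Y) : Prop :=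
  (φ ▷ FB.A ≫ ρlY = ρlX ≫ φ) ∧ (FA.A ◁ φ ≫ ρrY = ρrX ≫ φ)

/-- `P_B(φ) := ρˡ_Y ∘ (1_B ⊗ φ) ∘ (1_B ⊗ ρˡ_X) ∘ ((Δ_B ∘ η_B) ⊗ 1_X)`. -/
def PB {a b : C} (FA : Frob a) (FB : Frob b) {X Y : a ⟶ b}
    (ρlX : X ≫ FB.A ⟶ X) (ρlY : Y ≫ FB.A ⟶ Y) (φ : X ⟶ Y) : X ⟶ Y :=
  (ρ_ X).inv ≫ X ◁ (FB.one ≫ FB.comul) ≫ (α_ X FB.A FB.A).inv ≫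
    ρlX ▷ FB.A ≫ φ ▷ FB.A ≫ ρlY

/-- `P_A(φ) := ρʳ_Y ∘ (φ ⊗ 1_A) ∘ (ρʳ_X ⊗ 1_A) ∘ (1_X ⊗ (Δ_A ∘ η_A))`. -/
def PA {a b : C} (FA : Frob a) (FB : Frob b) {X Y : a ⟶ b}
    (ρrX : FA.A ≫ X ⟶ X) (ρrY : FA.A ≫ Y ⟶ Y) (φ : X ⟶ Y) : X ⟶ Y :=
  (λ_ X).inv ≫ (FA.one ≫ FA.comul) ▷ X ≫ (α_ FA.A FA.A X).hom ≫
    FA.A ◁ ρrX ≫ FA.A ◁ φ ≫ ρrY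

open Bicategory.Opposite Opposite

def Frob.op {a : C} (F : Frob a) : Frob (op a) where
  A := F.A.op
  mul := op2 F.mul
  one := op2 F.one
  comul := op2 F.comul
  counit := op2 F.counit
  mul_assoc := congrArg op2 (by simp [← F.mul_assoc])
  mul_one := congrArg op2 F.one_mul
  one_mul := congrArg op2 F.mul_one
  comul_coassoc := congrArg op2 (by simp [reassoc_of% F.comul_coassoc])
  comul_counit := congrArg op2 F.counit_comul
  counit_comul := congrArg op2 F.comul_counit
  frob_left := congrArg op2 F.frob_right
  frob_right := congrArg op2 F.frob_left

section LeftAverage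

variable {a b : C} (FA : Frob a) (FB : Frob b) {X Y : a ⟶ b}
  {ρlX : X ≫ FB.A ⟶ X} {ρlY : Y ≫ FB.A ⟶ Y}

theorem PB_eq_self_of_left_linear (hsep : FB.comul ≫ FB.mul = 𝟙 FB.A)
    (hX_assoc : (α_ X FB.A FB.A).hom ≫ X ◁ FB.mul ≫ ρlX = ρlX ▷ FB.A ≫ ρlX)
    (hX_unit : (ρ_ X).inv ≫ X ◁ FB.one ≫ ρlX = 𝟙 X)
    {φ : X ⟶ Y} (hφ : φ ▷ FB.A ≫ ρlY = ρlX ≫ φ) :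
    PB FA FB ρlX ρlY φ = φ := by
  unfold PB
  rw [hφ, ← reassoc_of% hX_assoc]
  calc (ρ_ X).inv ≫ X ◁ (FB.one ≫ FB.comul) ≫ (α_ X FB.A FB.A).inv ≫ (α_ X FB.A FB.A).hom ≫
        X ◁ FB.mul ≫ ρlX ≫ φ
      = (ρ_ X).inv ≫ X ◁ FB.one ≫ X ◁ (FB.comul ≫ FB.mul) ≫ ρlX ≫ φ := by bicategory
    _ = φ := by rw [hsep, whiskerLeft_id, Category.id_comp, reassoc_of% hX_unit]

theorem PB_whiskerRight_comp_act
    (hY_assoc : (α_ Y FB.A FB.A).hom ≫ Y ◁ FB.mul ≫ ρlY = ρlY ▷ FB.A ≫ ρlY) (φ : X ⟶ Y) :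
    PB FA FB ρlX ρlY φ ▷ FB.A ≫ ρlY =
      X ◁ FB.comul ≫ (α_ X FB.A FB.A).inv ≫ ρlX ▷ FB.A ≫ φ ▷ FB.A ≫ ρlY := by
  have hunit : (λ_ FB.A).inv ≫ FB.one ▷ FB.A ≫ FB.mul ≫ FB.comul = FB.comul := by
    rw [reassoc_of% FB.one_mul]
  calc PB FA FB ρlX ρlY φ ▷ FB.A ≫ ρlY
      = (ρ_ X).inv ▷ FB.A ≫ (X ◁ (FB.one ≫ FB.comul)) ▷ FB.A ≫ (α_ X FB.A FB.A).inv ▷ FB.A ≫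
          (ρlX ▷ FB.A) ▷ FB.A ≫ (φ ▷ FB.A) ▷ FB.A ≫ (ρlY ▷ FB.A ≫ ρlY) := by
        unfold PB; bicategory
    _ = (ρ_ X).inv ▷ FB.A ≫ (X ◁ (FB.one ≫ FB.comul)) ▷ FB.A ≫ (α_ X FB.A FB.A).inv ▷ FB.A ≫
          (α_ (X ≫ FB.A) FB.A FB.A).hom ≫ ρlX ▷ (FB.A ≫ FB.A) ≫
          (φ ▷ (FB.A ≫ FB.A) ≫ Y ◁ FB.mul) ≫ ρlY := by
        rw [← hY_assoc]; bicategory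
    _ = (ρ_ X).inv ▷ FB.A ≫ (X ◁ (FB.one ≫ FB.comul)) ▷ FB.A ≫ (α_ X FB.A FB.A).inv ▷ FB.A ≫
          (α_ (X ≫ FB.A) FB.A FB.A).hom ≫ (ρlX ▷ (FB.A ≫ FB.A) ≫ X ◁ FB.mul) ≫
          φ ▷ FB.A ≫ ρlY := by
        rw [← whisker_exchange]; bicategory
    _ = X ◁ ((λ_ FB.A).inv ≫ FB.one ▷ FB.A ≫
          (FB.comul ▷ FB.A ≫ (α_ FB.A FB.A FB.A).hom ≫ FB.A ◁ FB.mul)) ≫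
          (α_ X FB.A FB.A).inv ≫ ρlX ▷ FB.A ≫ φ ▷ FB.A ≫ ρlY := by
        rw [← whisker_exchange]; bicategory
    _ = X ◁ FB.comul ≫ (α_ X FB.A FB.A).inv ≫ ρlX ▷ FB.A ≫ φ ▷ FB.A ≫ ρlY := by
        rw [FB.frob_right, hunit]

theorem act_comp_PB
    (hX_assoc : (α_ X FB.A FB.A).hom ≫ X ◁ FB.mul ≫ ρlX = ρlX ▷ FB.A ≫ ρlX) (φ : X ⟶ Y) :
    ρlX ≫ PB FA FB ρlX ρlY φ =
      X ◁ FB.comul ≫ (α_ X FB.A FB.A).inv ≫ ρlX ▷ FB.A ≫ φ ▷ FB.A ≫ ρlY := by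
  have hunit : (ρ_ FB.A).inv ≫ FB.A ◁ FB.one ≫ FB.mul ≫ FB.comul = FB.comul := by
    rw [reassoc_of% FB.mul_one]
  calc ρlX ≫ PB FA FB ρlX ρlY φ
      = (ρ_ (X ≫ FB.A)).inv ≫ (ρlX ▷ 𝟙 b ≫ X ◁ (FB.one ≫ FB.comul)) ≫ (α_ X FB.A FB.A).inv ≫
          ρlX ▷ FB.A ≫ φ ▷ FB.A ≫ ρlY := by
        unfold PB; bicategory
    _ = (ρ_ (X ≫ FB.A)).inv ≫ (X ≫ FB.A) ◁ (FB.one ≫ FB.comul) ≫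
          (α_ (X ≫ FB.A) FB.A FB.A).inv ≫ (ρlX ▷ FB.A ≫ ρlX) ▷ FB.A ≫ φ ▷ FB.A ≫ ρlY := by
        rw [← whisker_exchange]; bicategory
    _ = X ◁ ((ρ_ FB.A).inv ≫ FB.A ◁ FB.one ≫
          (FB.A ◁ FB.comul ≫ (α_ FB.A FB.A FB.A).inv ≫ FB.mul ▷ FB.A)) ≫
          (α_ X FB.A FB.A).inv ≫ ρlX ▷ FB.A ≫ φ ▷ FB.A ≫ ρlY := by
        rw [← hX_assoc]; bicategory
    _ = X ◁ FB.comul ≫ (α_ X FB.A FB.A).inv ≫ ρlX ▷ FB.A ≫ φ ▷ FB.A ≫ ρlY := by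
        rw [FB.frob_left, hunit]

theorem PB_left_linear
    (hX_assoc : (α_ X FB.A FB.A).hom ≫ X ◁ FB.mul ≫ ρlX = ρlX ▷ FB.A ≫ ρlX)
    (hY_assoc : (α_ Y FB.A FB.A).hom ≫ Y ◁ FB.mul ≫ ρlY = ρlY ▷ FB.A ≫ ρlY) (φ : X ⟶ Y) :
    PB FA FB ρlX ρlY φ ▷ FB.A ≫ ρlY = ρlX ≫ PB FA FB ρlX ρlY φ := by
  rw [PB_whiskerRight_comp_act FA FB hY_assoc, act_comp_PB FA FB hX_assoc]

end LeftAverage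

section RightAverage

variable {a b : C} (FA : Frob a) (FB : Frob b) {X Y : a ⟶ b}
  {ρrX : FA.A ≫ X ⟶ X} {ρrY : FA.A ≫ Y ⟶ Y}

theorem op2_left_assoc_of_right_assoc
    (h : (α_ FA.A FA.A X).hom ≫ FA.A ◁ ρrX ≫ ρrX = FA.mul ▷ X ≫ ρrX) :
    (α_ X.op FA.op.A FA.op.A).hom ≫ X.op ◁ FA.op.mul ≫ op2 ρrX =
      op2 ρrX ▷ FA.op.A ≫ op2 ρrX := by
  have h' : (α_ FA.A FA.A X).inv ≫ FA.mul ▷ X ≫ ρrX = FA.A ◁ ρrX ≫ ρrX := by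
    rw [← h, Iso.inv_hom_id_assoc]
  exact congrArg op2 h'

theorem PA_eq_self_of_right_linear (hsep : FA.comul ≫ FA.mul = 𝟙 FA.A)
    (hX_assoc : (α_ FA.A FA.A X).hom ≫ FA.A ◁ ρrX ≫ ρrX = FA.mul ▷ X ≫ ρrX)
    (hX_unit : (λ_ X).inv ≫ FA.one ▷ X ≫ ρrX = 𝟙 X)
    {φ : X ⟶ Y} (hφ : FA.A ◁ φ ≫ ρrY = ρrX ≫ φ) :
    PA FA FB ρrX ρrY φ = φ :=
  congrArg Hom2.unop2 <| PB_eq_self_of_left_linear FB.op FA.op (congrArg op2 hsep)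
    (op2_left_assoc_of_right_assoc FA hX_assoc) (congrArg op2 hX_unit) (congrArg op2 hφ)

theorem PA_right_linear
    (hX_assoc : (α_ FA.A FA.A X).hom ≫ FA.A ◁ ρrX ≫ ρrX = FA.mul ▷ X ≫ ρrX)
    (hY_assoc : (α_ FA.A FA.A Y).hom ≫ FA.A ◁ ρrY ≫ ρrY = FA.mul ▷ Y ≫ ρrY) (φ : X ⟶ Y) :
    FA.A ◁ PA FA FB ρrX ρrY φ ≫ ρrY = ρrX ≫ PA FA FB ρrX ρrY φ :=
  congrArg Hom2.unop2 <| PB_left_linear FB.op FA.op (op2_left_assoc_of_right_assoc FA hX_assoc)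
    (op2_left_assoc_of_right_assoc FA hY_assoc) (op2 φ)

end RightAverage

theorem PB_PA_comm {a b : C} (FA : Frob a) (FB : Frob b) {X Y : a ⟶ b}
    {ρlX : X ≫ FB.A ⟶ X} {ρrX : FA.A ≫ X ⟶ X} {ρlY : Y ≫ FB.A ⟶ Y} {ρrY : FA.A ≫ Y ⟶ Y}
    (hX : ρrX ▷ FB.A ≫ ρlX = (α_ FA.A X FB.A).hom ≫ FA.A ◁ ρlX ≫ ρrX)
    (hY : ρrY ▷ FB.A ≫ ρlY = (α_ FA.A Y FB.A).hom ≫ FA.A ◁ ρlY ≫ ρrY) (φ : X ⟶ Y) :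
    PB FA FB ρlX ρlY (PA FA FB ρrX ρrY φ) = PA FA FB ρrX ρrY (PB FA FB ρlX ρlY φ) := by
  set eA := FA.one ≫ FA.comul
  set eB := FB.one ≫ FB.comul
  calc PB FA FB ρlX ρlY (PA FA FB ρrX ρrY φ)
      = (ρ_ X).inv ≫ X ◁ eB ≫ (α_ X FB.A FB.A).inv ≫ ρlX ▷ FB.A ≫ (λ_ X).inv ▷ FB.A ≫
          (eA ▷ X) ▷ FB.A ≫ (α_ FA.A FA.A X).hom ▷ FB.A ≫ (FA.A ◁ ρrX) ▷ FB.A ≫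
          (FA.A ◁ φ) ▷ FB.A ≫ (ρrY ▷ FB.A ≫ ρlY) := by
        unfold PB PA; bicategory
    _ = (λ_ X).inv ≫
          (𝟙 a ◁ ((ρ_ X).inv ≫ X ◁ eB ≫ (α_ X FB.A FB.A).inv ≫ ρlX ▷ FB.A) ≫
            eA ▷ (X ≫ FB.A)) ≫ (α_ FA.A FA.A (X ≫ FB.A)).hom ≫
          FA.A ◁ ((α_ FA.A X FB.A).inv ≫ ρrX ▷ FB.A ≫ φ ▷ FB.A ≫ ρlY) ≫ ρrY := by
        rw [hY]; bicategory
    _ = (λ_ X).inv ≫ eA ▷ X ≫ (α_ FA.A FA.A X).hom ≫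
          FA.A ◁ ((ρ_ (FA.A ≫ X)).inv ≫ (FA.A ≫ X) ◁ eB ≫ (α_ (FA.A ≫ X) FB.A FB.A).inv ≫
            ((α_ FA.A X FB.A).hom ≫ FA.A ◁ ρlX ≫ ρrX) ▷ FB.A ≫ φ ▷ FB.A ≫ ρlY) ≫ ρrY := by
        rw [whisker_exchange]; bicategory
    _ = (λ_ X).inv ≫ eA ▷ X ≫ (α_ FA.A FA.A X).hom ≫
          FA.A ◁ ((ρ_ (FA.A ≫ X)).inv ≫ (ρrX ▷ 𝟙 b ≫ X ◁ eB) ≫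
            (α_ X FB.A FB.A).inv ≫ ρlX ▷ FB.A ≫ φ ▷ FB.A ≫ ρlY) ≫ ρrY := by
        rw [← hX, ← whisker_exchange]; bicategory
    _ = PA FA FB ρrX ρrY (PB FA FB ρlX ρlY φ) := by
        unfold PB PA; bicategory

/-- For separable Frobenius algebras `A` on `a` and `B` on `b`
and `B`-`A`-bimodules `X, Y : a → b`, the maps `P_B` and `P_A` commute, their
composite `π_{BA} := P_B ∘ P_A` is idempotent, `π_{BA}(φ)` is a bimodule map
for every `φ`, and `π_{BA}(φ) = φ` whenever `φ` is a bimodule map; hence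
`π_{BA}` projects `Hom(X, Y)` onto the bimodule maps. -/
theorem piBA_projects_onto_bimodule_maps {a b : C} (FA : Frob a) (FB : Frob b)
    (hsepA : FA.comul ≫ FA.mul = 𝟙 FA.A) (hsepB : FB.comul ≫ FB.mul = 𝟙 FB.A)
    {X Y : a ⟶ b}
    (ρlX : X ≫ FB.A ⟶ X) (ρrX : FA.A ≫ X ⟶ X)
    (ρlY : Y ≫ FB.A ⟶ Y) (ρrY : FA.A ≫ Y ⟶ Y)
    (hX : IsBimodule FA FB X ρlX ρrX) (hY : IsBimodule FA FB Y ρlY ρrY) :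
    (∀ φ : X ⟶ Y,
      PB FA FB ρlX ρlY (PA FA FB ρrX ρrY φ) = PA FA FB ρrX ρrY (PB FA FB ρlX ρlY φ)) ∧
    (∀ φ : X ⟶ Y,
      PB FA FB ρlX ρlY (PA FA FB ρrX ρrY (PB FA FB ρlX ρlY (PA FA FB ρrX ρrY φ))) =
        PB FA FB ρlX ρlY (PA FA FB ρrX ρrY φ)) ∧
    (∀ φ : X ⟶ Y,
      IsBimoduleMap FA FB ρlX ρrX ρlY ρrY (PB FA FB ρlX ρlY (PA FA FB ρrX ρrY φ))) ∧
    (∀ φ : X ⟶ Y, IsBimoduleMap FA FB ρlX ρrX ρlY ρrY φ →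
      PB FA FB ρlX ρlY (PA FA FB ρrX ρrY φ) = φ) := by
  obtain ⟨hX_lassoc, hX_lunit, hX_rassoc, hX_runit, hX_comm⟩ := hX
  obtain ⟨hY_lassoc, -, hY_rassoc, -, hY_comm⟩ := hY
  have comm := PB_PA_comm FA FB hX_comm hY_comm
  have bimod : ∀ φ : X ⟶ Y,
      IsBimoduleMap FA FB ρlX ρrX ρlY ρrY (PB FA FB ρlX ρlY (PA FA FB ρrX ρrY φ)) :=
    fun φ => ⟨PB_left_linear FA FB hX_lassoc hY_lassoc _,
      by rw [comm]; exact PA_right_linear FA FB hX_rassoc hY_rassoc _⟩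
  have fix : ∀ φ : X ⟶ Y, IsBimoduleMap FA FB ρlX ρrX ρlY ρrY φ →
      PB FA FB ρlX ρlY (PA FA FB ρrX ρrY φ) = φ := fun φ hφ => by
    rw [PA_eq_self_of_right_linear FA FB hsepA hX_rassoc hX_runit hφ.2,
      PB_eq_self_of_left_linear FA FB hsepB hX_lassoc hX_lunit hφ.1]
  exact ⟨comm, fun φ => fix _ (bimod φ), bimod, fix⟩
end

section
/- Let K be a field, L a finite-dimensional Galois field extension of K, ι a finite index type, and b : ι → L a K-basis of L. Then the L-linear map from the space of functions Gal(L/K) → L to the space of functions ι → L sending c to the function i ↦ Σ_{σ ∈ Gal(L/K)} c(σ) · σ(b(i)) is bijective. (Equivalently, the matrix (σ(b(i)))_{σ ∈ Gal(L/K), i ∈ ι} is invertible; this combines Dedekind's lemma on independence of field automorphisms with the equality |Gal(L/K)| = [L : K].) -/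
/-!
The map is `c ↦ c ᵥ* M` for the matrix `M σ i = σ (b i)`. By Dedekind's lemma the rows of `M`
are `L`-linearly independent, i.e. the map is injective. Since `|Gal(L/K)| = [L : K] = |ι|`,
an injective linear map between spaces of the same dimension is bijective.
-/

theorem Matrix.vecMul_bijective_of_linearIndependent_row {m n K : Type*} [Field K]
    [Fintype m] [Fintype n] {M : Matrix m n K} (hM : LinearIndependent K M.row)
    (hcard : Fintype.card m = Fintype.card n) : Function.Bijective M.vecMul := by
  have hinj : Function.Injective M.vecMul := Matrix.vecMul_injective_iff.2 hM
  have hrank : Module.finrank K (m → K) = Module.finrank K (n → K) := by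
    simp only [Module.finrank_fintype_fun_eq_card, hcard]
  exact ⟨hinj, (LinearMap.injective_iff_surjective_of_finrank_eq_finrank
    (f := M.vecMulLinear) hrank).1 hinj⟩

/-- Dedekind's lemma, transported along the `M`-linear isomorphism `(L →ₗ[K] M) ≃ (ι → M)`
given by restriction to the basis `b`. -/
theorem linearIndependent_algHom_apply_basis {K L M ι : Type*} [CommSemiring K] [Semiring L]
    [Algebra K L] [CommRing M] [IsDomain M] [Algebra K M] (b : Module.Basis ι K L) :
    LinearIndependent M (fun (σ : L →ₐ[K] M) (i : ι) => σ (b i)) :=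
  (linearIndependent_toLinearMap K L M).map' _ (b.constr M).symm.ker

/-- Let `L/K` be a finite Galois extension and `b : ι → L` a
`K`-basis of `L`.  Then the `L`-linear map sending `c : Gal(L/K) → L` to the
function `i ↦ ∑ σ, c σ * σ (b i)` is bijective. -/
theorem galois_matrix_bijective
    (K L : Type*) [Field K] [Field L] [Algebra K L] [FiniteDimensional K L]
    [IsGalois K L] (ι : Type*) [Fintype ι] (b : Module.Basis ι K L) :
    Function.Bijective (fun (c : (L ≃ₐ[K] L) → L) (i : ι) =>
      ∑ σ : L ≃ₐ[K] L, c σ * σ (b i)) := by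
  let M : Matrix (L ≃ₐ[K] L) ι L := .of fun σ i => σ (b i)
  have hrows : LinearIndependent L M.row :=
    (linearIndependent_algHom_apply_basis b).comp _ AlgEquiv.coe_toAlgHom_injective
  have hcard : Fintype.card (L ≃ₐ[K] L) = Fintype.card ι := by
    rw [← Nat.card_eq_fintype_card, IsGalois.card_aut_eq_finrank, Module.finrank_eq_card_basis b]
  exact M.vecMul_bijective_of_linearIndependent_row hrows hcard
end

section
/- Let K be a field, L a finite-dimensional Galois field extension of K, ι a finite index type, b : ι → L a K-basis of L, and b' : ι → L a trace-dual family, i.e. Tr_{L/K}(b(i) · b'(j)) = 1 if i = j and 0 otherwise. Then the K-linear map from the space of functions Gal(L/K) → L to L ⊗_K L sending c to Σ_{σ ∈ Gal(L/K)} Σ_{i ∈ ι} (c(σ) · σ(b(i))) ⊗ b'(i) is bijective. (This identifies the twisted group ring L⟨Gal(L/K)⟩ with L ⊗_K L as K-vector spaces.) -/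
/-!
Let `Ψ : L ⊗[K] L → (Gal(L/K) → L)` send `x ⊗ y` to `τ ↦ x * τ y`. Composing the map of the
theorem after `Ψ` gives `x ⊗ y ↦ ∑ᵢ x ∑_σ σ (y bᵢ) ⊗ b'ᵢ = x ⊗ ∑ᵢ Tr(y bᵢ) b'ᵢ = x ⊗ y`,
because `b'` is the trace-dual basis of `b`. So the map is surjective, and both sides have
`K`-dimension `[L : K]²` since `|Gal(L/K)| = [L : K]`.
-/

open scoped TensorProduct

section

variable {K L : Type*} [Field K] [Field L] [Algebra K L] {ι : Type*} [Fintype ι]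

theorem Algebra.sum_trace_mul_smul_of_trace_dual [FiniteDimensional K L]
    [Algebra.IsSeparable K L] [DecidableEq ι] (b : Module.Basis ι K L) {b' : ι → L}
    (hb' : ∀ i j, Algebra.trace K L (b i * b' j) = if i = j then 1 else 0) (y : L) :
    ∑ i, Algebra.trace K L (y * b i) • b' i = y := by
  have hB := traceForm_nondegenerate K L
  obtain rfl : (traceForm K L).dualBasis hB b = b' := by
    rw [LinearMap.BilinForm.dualBasis_eq_iff]
    intro i j
    rw [traceForm_apply, mul_comm, hb']
  simpa using ((traceForm K L).dualBasis hB b).sum_repr y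

variable (K L) in
noncomputable def tensorToAutFun : L ⊗[K] L →ₗ[K] ((L ≃ₐ[K] L) → L) :=
  LinearMap.pi fun τ => TensorProduct.lift ((LinearMap.mul K L).compl₂ τ.toLinearMap)

@[simp]
theorem tensorToAutFun_tmul (x y : L) (τ : L ≃ₐ[K] L) :
    tensorToAutFun K L (x ⊗ₜ y) τ = x * τ y := rfl

variable [FiniteDimensional K L]

noncomputable def autFunToTensor (b b' : ι → L) : ((L ≃ₐ[K] L) → L) →ₗ[K] L ⊗[K] L :=
  ∑ σ, ∑ i, (TensorProduct.mk K L L).flip (b' i) ∘ₗ LinearMap.mulRight K (σ (b i)) ∘ₗ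
    LinearMap.proj σ

theorem autFunToTensor_apply (b b' : ι → L) (c : (L ≃ₐ[K] L) → L) :
    autFunToTensor b b' c = ∑ σ, ∑ i, (c σ * σ (b i)) ⊗ₜ[K] b' i := by
  simp [autFunToTensor]

theorem autFunToTensor_comp_tensorToAutFun [IsGalois K L] [DecidableEq ι]
    (b : Module.Basis ι K L) {b' : ι → L}
    (hb' : ∀ i j, Algebra.trace K L (b i * b' j) = if i = j then 1 else 0) :
    autFunToTensor b b' ∘ₗ tensorToAutFun K L = LinearMap.id := by
  refine TensorProduct.ext' fun x y => ?_
  simp only [LinearMap.comp_apply, autFunToTensor_apply, tensorToAutFun_tmul, LinearMap.id_apply]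
  calc ∑ σ : L ≃ₐ[K] L, ∑ i, (x * σ y * σ (b i)) ⊗ₜ[K] b' i
      = ∑ i, (x * ∑ σ : L ≃ₐ[K] L, σ (y * b i)) ⊗ₜ[K] b' i := by
        rw [Finset.sum_comm]
        simp only [Finset.mul_sum, TensorProduct.sum_tmul, map_mul, mul_assoc]
    _ = ∑ i, x ⊗ₜ[K] (Algebra.trace K L (y * b i) • b' i) := by
        simp only [← trace_eq_sum_automorphisms, ← Algebra.commutes, ← Algebra.smul_def,
          TensorProduct.smul_tmul]
    _ = x ⊗ₜ[K] y := by
        rw [← TensorProduct.tmul_sum, Algebra.sum_trace_mul_smul_of_trace_dual b hb']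

variable (K L) in
theorem IsGalois.finrank_autFun_eq_finrank_tensor [IsGalois K L] :
    Module.finrank K ((L ≃ₐ[K] L) → L) = Module.finrank K (L ⊗[K] L) := by
  rw [Module.finrank_pi_fintype, Module.finrank_tensorProduct, Finset.sum_const,
    Finset.card_univ, ← Nat.card_eq_fintype_card, IsGalois.card_aut_eq_finrank, smul_eq_mul]

end

/-- Let `L/K` be a finite Galois extension, `b : ι → L` a
`K`-basis and `b' : ι → L` a trace-dual family.  Then the `K`-linear map
sending `c : Gal(L/K) → L` to `∑ σ, ∑ i, (c σ * σ (b i)) ⊗ b' i` in `L ⊗_K L`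
is bijective. -/
theorem twisted_group_ring_iso_tensor
    (K L : Type*) [Field K] [Field L] [Algebra K L] [FiniteDimensional K L]
    [IsGalois K L] (ι : Type*) [Fintype ι] [DecidableEq ι]
    (b : Module.Basis ι K L) (b' : ι → L)
    (hb' : ∀ i j : ι, Algebra.trace K L (b i * b' j) = if i = j then 1 else 0) :
    Function.Bijective (fun c : (L ≃ₐ[K] L) → L =>
      ∑ σ : L ≃ₐ[K] L, ∑ i : ι, (c σ * σ (b i)) ⊗ₜ[K] b' i) := by
  have hsurj : Function.Surjective (autFunToTensor b b') :=
    Function.RightInverse.surjective (g := tensorToAutFun K L)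
      (LinearMap.congr_fun (autFunToTensor_comp_tensorToAutFun b hb'))
  have hinj := (LinearMap.injective_iff_surjective_of_finrank_eq_finrank
    (IsGalois.finrank_autFun_eq_finrank_tensor K L)).2 hsurj
  rw [show (fun c => ∑ σ, ∑ i, (c σ * σ (b i)) ⊗ₜ[K] b' i) = autFunToTensor b b' from
    funext fun c => (autFunToTensor_apply b b' c).symm]
  exact ⟨hinj, hsurj⟩
end

section
/- Let K be a field, L a finite-dimensional separable field extension of K, ι a finite index type, b : ι → L a K-basis of L, and b' : ι → L a trace-dual family, i.e. Tr_{L/K}(b(i) · b'(j)) = 1 if i = j and 0 otherwise. Let m : (L ⊗_K L) × (L ⊗_K L) → L ⊗_K L be the K-bilinear multiplication determined on elementary tensors by m(x ⊗ y, x' ⊗ y') = Tr_{L/K}(y · x') • (x ⊗ y'). Then m is associative, and e := Σ_{i ∈ ι} b(i) ⊗ b'(i) is a two-sided unit for m: m(e, z) = z = m(z, e) for all z ∈ L ⊗_K L. (This is the separable Frobenius algebra structure on L ⊗_K L obtained from the biadjunction associated with the extension L/K; in particular the unit is independent of the auxiliary twisting.) -/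
/-!
On pure tensors both bracketings of a triple product equal
`Tr(y x') Tr(y' x'') • (x ⊗ y'')`, which gives associativity. The unit laws amount to the two
expansions `x = ∑ Tr(x b'ᵢ) bᵢ` and `y = ∑ Tr(y bᵢ) b'ᵢ`. The first is the coordinate expansion in
the basis `b`; for the second, pairing with `b` shows that `b'` is linearly independent, so by a
dimension count it is a basis too, with `b` as its dual family.
-/

open scoped TensorProduct

namespace Module.Basis

variable {R M N ι : Type*} [CommSemiring R] [AddCommMonoid M] [Module R M]
  [AddCommMonoid N] [Module R N] [DecidableEq ι]

theorem apply_eq_repr_of_biorthogonal (b : Basis ι R M) (B : M →ₗ[R] N →ₗ[R] R) {b' : ι → N}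
    (h : ∀ i j, B (b i) (b' j) = if i = j then 1 else 0) (x : M) (j : ι) :
    B x (b' j) = b.repr x j :=
  LinearMap.congr_fun (b.ext (f₁ := B.flip (b' j)) (f₂ := b.coord j)
    fun i => by simp [h, Finsupp.single_apply]) x

theorem sum_smul_of_biorthogonal [Fintype ι] (b : Basis ι R M) (B : M →ₗ[R] N →ₗ[R] R)
    {b' : ι → N} (h : ∀ i j, B (b i) (b' j) = if i = j then 1 else 0) (x : M) :
    ∑ i, B x (b' i) • b i = x := by
  simp only [b.apply_eq_repr_of_biorthogonal B h, b.sum_repr]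

theorem sum_smul_dual_of_biorthogonal {K V : Type*} [Field K] [AddCommGroup V] [Module K V]
    [Fintype ι] (b : Basis ι K V) (B : V →ₗ[K] V →ₗ[K] K) {b' : ι → V}
    (h : ∀ i j, B (b i) (b' j) = if i = j then 1 else 0) (y : V) :
    ∑ i, B (b i) y • b' i = y := by
  have : FiniteDimensional K V := .of_basis b
  have hb' : LinearIndependent K b' :=
    .of_pairwise_dual_eq_zero_one b' (fun i => B (b i))
      (fun i j hij => by simp [h, hij]) (fun i => by simp [h])
  let c := basisOfLinearIndependentOfCardEqFinrank' b' hb' (finrank_eq_card_basis b).symm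
  simpa [c] using c.sum_smul_of_biorthogonal B.flip (b' := b) (fun i j => by simp [c, h, eq_comm]) y

end Module.Basis

namespace TensorProduct

variable {R M N : Type*} [CommSemiring R] [AddCommMonoid M] [Module R M]
  [AddCommMonoid N] [Module R N] {φ : N → M → R}
  {m : M ⊗[R] N →ₗ[R] M ⊗[R] N →ₗ[R] M ⊗[R] N}

theorem assoc_of_tmul (hm : ∀ x y x' y', m (x ⊗ₜ y) (x' ⊗ₜ y') = φ y x' • (x ⊗ₜ y'))
    (z₁ z₂ z₃ : M ⊗[R] N) : m (m z₁ z₂) z₃ = m z₁ (m z₂ z₃) := by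
  induction z₁ using TensorProduct.induction_on with
  | zero => simp
  | add _ _ h₁ h₂ => simp [h₁, h₂]
  | tmul x y =>
  induction z₂ using TensorProduct.induction_on with
  | zero => simp
  | add _ _ h₁ h₂ => simp [h₁, h₂]
  | tmul x' y' =>
  induction z₃ using TensorProduct.induction_on with
  | zero => simp
  | add _ _ h₁ h₂ => simp [h₁, h₂]
  | tmul x'' y'' => simp only [hm, map_smul, LinearMap.smul_apply, smul_comm (φ y x')]

variable {ι : Type*} [Fintype ι]

theorem left_unit_of_tmul (hm : ∀ x y x' y', m (x ⊗ₜ y) (x' ⊗ₜ y') = φ y x' • (x ⊗ₜ y'))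
    (u : ι → M) (v : ι → N) (h : ∀ x, ∑ i, φ (v i) x • u i = x) (z : M ⊗[R] N) :
    m (∑ i, u i ⊗ₜ v i) z = z := by
  induction z using TensorProduct.induction_on with
  | zero => simp
  | add _ _ h₁ h₂ => rw [map_add, h₁, h₂]
  | tmul x y =>
    simp only [map_sum, LinearMap.sum_apply, hm, smul_tmul', ← sum_tmul, h]

theorem right_unit_of_tmul (hm : ∀ x y x' y', m (x ⊗ₜ y) (x' ⊗ₜ y') = φ y x' • (x ⊗ₜ y'))
    (u : ι → M) (v : ι → N) (h : ∀ y, ∑ i, φ y (u i) • v i = y) (z : M ⊗[R] N) :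
    m z (∑ i, u i ⊗ₜ v i) = z := by
  induction z using TensorProduct.induction_on with
  | zero => simp
  | add _ _ h₁ h₂ => rw [map_add, LinearMap.add_apply, h₁, h₂]
  | tmul x y => simp only [map_sum, hm, ← tmul_smul, ← tmul_sum, h]

end TensorProduct

theorem tensor_trace_multiplication_assoc_unital_general
    (K L : Type*) [Field K] [Field L] [Algebra K L] (ι : Type*) [Fintype ι] [DecidableEq ι]
    (b : Module.Basis ι K L) (b' : ι → L)
    (hb' : ∀ i j : ι, Algebra.trace K L (b i * b' j) = if i = j then 1 else 0)
    (m : L ⊗[K] L →ₗ[K] L ⊗[K] L →ₗ[K] L ⊗[K] L)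
    (hm : ∀ x y x' y' : L,
      m (x ⊗ₜ[K] y) (x' ⊗ₜ[K] y') = Algebra.trace K L (y * x') • (x ⊗ₜ[K] y')) :
    (∀ z₁ z₂ z₃ : L ⊗[K] L, m (m z₁ z₂) z₃ = m z₁ (m z₂ z₃)) ∧
    (∀ z : L ⊗[K] L, m (∑ i : ι, b i ⊗ₜ[K] b' i) z = z) ∧
    (∀ z : L ⊗[K] L, m z (∑ i : ι, b i ⊗ₜ[K] b' i) = z) := by
  have hdual : ∀ i j, Algebra.traceForm K L (b i) (b' j) = if i = j then 1 else 0 := by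
    simpa only [Algebra.traceForm_apply] using hb'
  refine ⟨TensorProduct.assoc_of_tmul hm,
    TensorProduct.left_unit_of_tmul hm b b' fun x => ?_,
    TensorProduct.right_unit_of_tmul hm b b' fun y => ?_⟩
  · simpa only [Algebra.traceForm_apply, mul_comm x] using b.sum_smul_of_biorthogonal _ hdual x
  · simpa only [Algebra.traceForm_apply, mul_comm _ y] using
      b.sum_smul_dual_of_biorthogonal _ hdual y

/-- Let `L/K` be a finite separable field extension,
`b : ι → L` a `K`-basis and `b' : ι → L` a trace-dual family.  Let `m` be the
`K`-bilinear multiplication on `L ⊗_K L` with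
`m (x ⊗ y) (x' ⊗ y') = Tr_{L/K}(y x') • (x ⊗ y')`.  Then `m` is associative and
`e := ∑ i, b i ⊗ b' i` is a two-sided unit for `m`. -/
theorem tensor_trace_multiplication_assoc_unital
    (K L : Type*) [Field K] [Field L] [Algebra K L] [FiniteDimensional K L]
    [Algebra.IsSeparable K L] (ι : Type*) [Fintype ι] [DecidableEq ι]
    (b : Module.Basis ι K L) (b' : ι → L)
    (hb' : ∀ i j : ι, Algebra.trace K L (b i * b' j) = if i = j then 1 else 0)
    (m : L ⊗[K] L →ₗ[K] L ⊗[K] L →ₗ[K] L ⊗[K] L)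
    (hm : ∀ x y x' y' : L,
      m (x ⊗ₜ[K] y) (x' ⊗ₜ[K] y') = Algebra.trace K L (y * x') • (x ⊗ₜ[K] y')) :
    (∀ z₁ z₂ z₃ : L ⊗[K] L, m (m z₁ z₂) z₃ = m z₁ (m z₂ z₃)) ∧
    (∀ z : L ⊗[K] L, m (∑ i : ι, b i ⊗ₜ[K] b' i) z = z) ∧
    (∀ z : L ⊗[K] L, m z (∑ i : ι, b i ⊗ₜ[K] b' i) = z) :=
  tensor_trace_multiplication_assoc_unital_general K L ι b b' hb' m hm
end

section
/- Let K be a field, L a finite-dimensional Galois field extension of K, ι a finite index type, b : ι → L a K-basis of L, and b' : ι → L a trace-dual family, i.e. Tr_{L/K}(b(i) · b'(j)) = 1 if i = j and 0 otherwise. Equip L ⊗_K L with the K-bilinear multiplication m determined by m(x ⊗ y, x' ⊗ y') = Tr_{L/K}(y · x') • (x ⊗ y'). For σ ∈ Gal(L/K) set u_σ := Σ_{i ∈ ι} σ(b(i)) ⊗ b'(i). Then u_{id} = Σ_i b(i) ⊗ b'(i) is the unit of m and m(u_σ, u_τ) = u_{σ∘τ} for all σ, τ ∈ Gal(L/K);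 in particular every u_σ is invertible for m, so σ ↦ u_σ is a group homomorphism from Gal(L/K) to the group of units of (L ⊗_K L, m). -/
/-!
For a symmetric bilinear form `B` on `M` with dual bases `b`, `b'`, the twisted product
`(x ⊗ y) * (x' ⊗ y') = B y x' • (x ⊗ y')` makes `M ⊗ M` a copy of `End M`, with `x ⊗ y` acting
as `v ↦ B y v • x`. Under this identification `∑ i, f (b i) ⊗ b' i` is the endomorphism `f`
itself, because `∑ i, B x (b' i) • b i = x`; hence `σ ↦ u σ` is multiplicative and `u 1` is
the identity. The right unit law needs nondegeneracy of `B`, which the same expansion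
provides.
-/

open scoped TensorProduct

namespace LinearMap.BilinForm

variable {R M ι : Type*} [CommRing R] [AddCommGroup M] [Module R M] [Fintype ι] [DecidableEq ι]
  {B : LinearMap.BilinForm R M} {b : Module.Basis ι R M} {b' : ι → M}

theorem sum_apply_dual_smul_basis (hb' : ∀ i j, B (b i) (b' j) = if i = j then 1 else 0)
    (x : M) : ∑ i, B x (b' i) • b i = x := by
  have hrepr : ∀ i, b.coord i = B.flip (b' i) := fun i ↦
    b.ext fun j ↦ by simp [hb', Finsupp.single_apply, eq_comm]
  conv_rhs => rw [← b.sum_repr x]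
  simp [← Module.Basis.coord_apply, hrepr]

theorem eq_zero_of_apply_basis_eq_zero (hB : B.IsSymm)
    (hb' : ∀ i j, B (b i) (b' j) = if i = j then 1 else 0) {z : M}
    (hz : ∀ j, B (b j) z = 0) : z = 0 := by
  have hflip : B.flip z = 0 := b.ext hz
  have hvanish : ∀ w, B w z = 0 := fun w ↦ by simpa using LinearMap.congr_fun hflip w
  rw [← sum_apply_dual_smul_basis hb' z]
  simp [hB.eq z, hvanish]

theorem sum_apply_basis_smul_dual (hB : B.IsSymm)
    (hb' : ∀ i j, B (b i) (b' j) = if i = j then 1 else 0) (y : M) :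
    ∑ i, B y (b i) • b' i = y := by
  rw [← sub_eq_zero]
  refine eq_zero_of_apply_basis_eq_zero hB hb' fun j ↦ ?_
  simp [hb', hB.eq y]

variable {m : M ⊗[R] M →ₗ[R] M ⊗[R] M →ₗ[R] M ⊗[R] M}

theorem twistedMul_sum_tmul_dual_left (hB : B.IsSymm)
    (hb' : ∀ i j, B (b i) (b' j) = if i = j then 1 else 0)
    (hm : ∀ x y x' y', m (x ⊗ₜ y) (x' ⊗ₜ y') = B y x' • (x ⊗ₜ y')) (f : M →ₗ[R] M) :
    m (∑ i, f (b i) ⊗ₜ b' i) = TensorProduct.map f LinearMap.id := by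
  refine TensorProduct.ext' fun x y ↦ ?_
  calc m (∑ i, f (b i) ⊗ₜ b' i) (x ⊗ₜ y)
      = f (∑ i, B x (b' i) • b i) ⊗ₜ y := by
        simp [hm, hB.eq (b' _), TensorProduct.sum_tmul, TensorProduct.smul_tmul']
    _ = TensorProduct.map f LinearMap.id (x ⊗ₜ y) := by
        rw [sum_apply_dual_smul_basis hb']; rfl

theorem twistedMul_sum_tmul_dual_right (hB : B.IsSymm)
    (hb' : ∀ i j, B (b i) (b' j) = if i = j then 1 else 0)
    (hm : ∀ x y x' y', m (x ⊗ₜ y) (x' ⊗ₜ y') = B y x' • (x ⊗ₜ y')) :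
    m.flip (∑ i, b i ⊗ₜ b' i) = LinearMap.id := by
  refine TensorProduct.ext' fun x y ↦ ?_
  calc m.flip (∑ i, b i ⊗ₜ b' i) (x ⊗ₜ y)
      = x ⊗ₜ (∑ i, B y (b i) • b' i) := by
        simp [hm, TensorProduct.tmul_sum]
    _ = x ⊗ₜ y := by rw [sum_apply_basis_smul_dual hB hb']

end LinearMap.BilinForm

open LinearMap.BilinForm in
theorem galois_to_units_of_tensor_general
    (K L : Type*) [Field K] [Field L] [Algebra K L] (ι : Type*) [Fintype ι] [DecidableEq ι]
    (b : Module.Basis ι K L) (b' : ι → L)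
    (hb' : ∀ i j : ι, Algebra.trace K L (b i * b' j) = if i = j then 1 else 0)
    (m : L ⊗[K] L →ₗ[K] L ⊗[K] L →ₗ[K] L ⊗[K] L)
    (hm : ∀ x y x' y' : L,
      m (x ⊗ₜ[K] y) (x' ⊗ₜ[K] y') = Algebra.trace K L (y * x') • (x ⊗ₜ[K] y'))
    (u : (L ≃ₐ[K] L) → L ⊗[K] L)
    (hu : ∀ σ : L ≃ₐ[K] L, u σ = ∑ i : ι, σ (b i) ⊗ₜ[K] b' i) :
    (u 1 = ∑ i : ι, b i ⊗ₜ[K] b' i) ∧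
    (∀ z : L ⊗[K] L, m (u 1) z = z) ∧
    (∀ z : L ⊗[K] L, m z (u 1) = z) ∧
    (∀ σ τ : L ≃ₐ[K] L, m (u σ) (u τ) = u (σ * τ)) ∧
    (∀ σ : L ≃ₐ[K] L, m (u σ) (u σ⁻¹) = u 1 ∧ m (u σ⁻¹) (u σ) = u 1) := by
  have hB := Algebra.traceForm_isSymm K (S := L)
  have hbB : ∀ i j, Algebra.traceForm K L (b i) (b' j) = if i = j then 1 else 0 := hb'
  have hmB := twistedMul_sum_tmul_dual_left hB hbB hm
  have hu1 : u 1 = ∑ i, b i ⊗ₜ[K] b' i := by simp [hu]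
  have hmul : ∀ σ τ : L ≃ₐ[K] L, m (u σ) (u τ) = u (σ * τ) := fun σ τ ↦ by
    simpa [hu] using congr($(hmB σ.toLinearMap) (u τ))
  refine ⟨hu1, fun z ↦ ?_, fun z ↦ ?_, hmul, fun σ ↦ ?_⟩
  · simpa [hu] using congr($(hmB LinearMap.id) z)
  · simpa [hu1] using congr($(twistedMul_sum_tmul_dual_right hB hbB hm) z)
  · simp [hmul]

/-- Let `L/K` be a finite Galois extension, `b : ι → L` a
`K`-basis and `b' : ι → L` a trace-dual family, and let `m` be the
trace-twisted multiplication on `L ⊗_K L`.  For `σ ∈ Gal(L/K)` set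
`u σ := ∑ i, σ (b i) ⊗ b' i`.  Then `u 1 = ∑ i, b i ⊗ b' i` is the unit of
`m`, `m (u σ) (u τ) = u (σ ∘ τ)`, and every `u σ` is invertible for `m`; in
particular `σ ↦ u σ` is a group homomorphism into the units of
`(L ⊗_K L, m)`. -/
theorem galois_to_units_of_tensor
    (K L : Type*) [Field K] [Field L] [Algebra K L] [FiniteDimensional K L]
    [IsGalois K L] (ι : Type*) [Fintype ι] [DecidableEq ι]
    (b : Module.Basis ι K L) (b' : ι → L)
    (hb' : ∀ i j : ι, Algebra.trace K L (b i * b' j) = if i = j then 1 else 0)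
    (m : L ⊗[K] L →ₗ[K] L ⊗[K] L →ₗ[K] L ⊗[K] L)
    (hm : ∀ x y x' y' : L,
      m (x ⊗ₜ[K] y) (x' ⊗ₜ[K] y') = Algebra.trace K L (y * x') • (x ⊗ₜ[K] y'))
    (u : (L ≃ₐ[K] L) → L ⊗[K] L)
    (hu : ∀ σ : L ≃ₐ[K] L, u σ = ∑ i : ι, σ (b i) ⊗ₜ[K] b' i) :
    (u 1 = ∑ i : ι, b i ⊗ₜ[K] b' i) ∧
    (∀ z : L ⊗[K] L, m (u 1) z = z) ∧
    (∀ z : L ⊗[K] L, m z (u 1) = z) ∧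
    (∀ σ τ : L ≃ₐ[K] L, m (u σ) (u τ) = u (σ * τ)) ∧
    (∀ σ : L ≃ₐ[K] L, m (u σ) (u σ⁻¹) = u 1 ∧ m (u σ⁻¹) (u σ) = u 1) :=
  galois_to_units_of_tensor_general K L ι b b' hb' m hm u hu
end
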